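/- arXiv:1610.01962 — 10 statements merged into one kernel-verified Lean document; each statement's English description precedes it below -/
import Mathlib

section
/- If f : Π² → closure(Π) is a holomorphic Pick function of two variables that is homogeneous of degree one (f(wz₁, wz₂) = w·f(z₁,z₂) whenever (z₁,z₂) and (wz₁,wz₂) lie in Π²), and η is defined by η(w) = e^{is} f(−e^{−is}/w, −e^{−is}) whenever (−e^{−is}/w, −e^{−is}) ∈ Π², then η is well-defined (independent of s), and both w ↦ η(w) and w ↦ −w·η(w) are Pick functions of one variable (holomorphic maps Π → closure(Π)). -/
/-!
Homogeneity makes `ζ ↦ f (ζ / w) ζ / ζ` constant on the sector `{ζ ∈ Π : ζ / w ∈ Π}`; calling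
this constant `-η w` gives `f (ζ / w) ζ = -ζ η(w)` there. Taking `ζ = w - 1` shows that `η` is
holomorphic. The Pick property gives `Im (-ζ η(w)) ≥ 0` on the sector, hence on its closure, which
contains the segment from `-1` to `w`: its endpoints give `Im η(w) ≥ 0` and `Im (-w η(w)) ≥ 0`.
-/

open Complex Set

noncomputable section

/-- The open upper half-plane Π. -/
def UHP : Set ℂ := {z : ℂ | 0 < z.im}

namespace HomogeneousPick

def HomogeneousOnUHP (f : ℂ → ℂ → ℂ) : Prop :=
  ∀ w z₁ z₂ : ℂ, z₁ ∈ UHP → z₂ ∈ UHP → w * z₁ ∈ UHP → w * z₂ ∈ UHP →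
    f (w * z₁) (w * z₂) = w * f z₁ z₂

def sector (w : ℂ) : Set ℂ := {ζ | ζ / w ∈ UHP ∧ ζ ∈ UHP}

lemma ne_zero_of_mem_UHP {z : ℂ} (hz : z ∈ UHP) : z ≠ 0 := by
  rintro rfl
  simp [UHP] at hz

lemma neg_add_mul_mem_sector {w : ℂ} (hw : w ∈ UHP) {a b : ℝ} (ha : 0 < a) (hb : 0 < b) :
    -(a : ℂ) + b * w ∈ sector w := by
  have hnorm : 0 < normSq w := normSq_pos.mpr (ne_zero_of_mem_UHP hw)
  constructor
  · have : ((-(a : ℂ) + b * w) / w).im = a * w.im / normSq w := by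
      simp only [div_im, add_im, add_re, neg_im, neg_re, ofReal_im, ofReal_re, mul_im, mul_re]
      ring
    rw [UHP, mem_ofPred_eq, this]
    exact div_pos (mul_pos ha hw) hnorm
  · simpa [UHP] using mul_pos hb hw

lemma sub_one_mem_sector {w : ℂ} (hw : w ∈ UHP) : w - 1 ∈ sector w := by
  simpa [sub_eq_neg_add] using neg_add_mul_mem_sector hw one_pos one_pos

lemma openSegment_subset_sector {w : ℂ} (hw : w ∈ UHP) : openSegment ℝ (-1) w ⊆ sector w := by
  rintro _ ⟨a, b, ha, hb, -, rfl⟩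
  simpa [real_smul] using neg_add_mul_mem_sector hw ha hb

lemma segment_subset_closure_sector {w : ℂ} (hw : w ∈ UHP) :
    segment ℝ (-1) w ⊆ closure (sector w) :=
  segment_subset_closure_openSegment.trans (closure_mono (openSegment_subset_sector hw))

variable {f : ℂ → ℂ → ℂ}

lemma HomogeneousOnUHP.apply_div_eq_of_mem_sector (hf : HomogeneousOnUHP f) {w ζ ξ : ℂ}
    (hζ : ζ ∈ sector w) (hξ : ξ ∈ sector w) : f (ζ / w) ζ / ζ = f (ξ / w) ξ / ξ := by
  have hξ0 := ne_zero_of_mem_UHP hξ.2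
  have hζ0 := ne_zero_of_mem_UHP hζ.2
  have h₁ : ζ / ξ * (ξ / w) = ζ / w := by field_simp
  have h₂ : ζ / ξ * ξ = ζ := div_mul_cancel₀ ζ hξ0
  have key := hf (ζ / ξ) (ξ / w) ξ hξ.1 hξ.2 (by rw [h₁]; exact hζ.1)
    (by rw [h₂]; exact hζ.2)
  rw [h₁, h₂] at key
  rw [key]
  field_simp

def eta (f : ℂ → ℂ → ℂ) (w : ℂ) : ℂ := -(f ((w - 1) / w) (w - 1) / (w - 1))

lemma eta_eq_of_mem_sector (hf : HomogeneousOnUHP f) {w ζ : ℂ} (hw : w ∈ UHP)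
    (hζ : ζ ∈ sector w) : eta f w = -(f (ζ / w) ζ / ζ) := by
  rw [eta, hf.apply_div_eq_of_mem_sector (sub_one_mem_sector hw) hζ]

lemma differentiableOn_eta (hf : DifferentiableOn ℂ (fun p : ℂ × ℂ => f p.1 p.2) (UHP ×ˢ UHP)) :
    DifferentiableOn ℂ (eta f) UHP := by
  have hpair : DifferentiableOn ℂ (fun w : ℂ => ((w - 1) / w, w - 1)) UHP :=
    ((differentiableOn_id.sub_const 1).div differentiableOn_id
      fun _ hw => ne_zero_of_mem_UHP hw).prodMk (differentiableOn_id.sub_const 1)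
  have hcomp := hf.comp hpair fun w hw => mk_mem_prod (sub_one_mem_sector hw).1
    (sub_one_mem_sector hw).2
  exact (hcomp.div (differentiableOn_id.sub_const 1)
    fun w hw => ne_zero_of_mem_UHP (sub_one_mem_sector hw).2).neg

lemma im_neg_mul_eta_nonneg (hf : HomogeneousOnUHP f)
    (hf_pick : ∀ z₁ z₂ : ℂ, z₁ ∈ UHP → z₂ ∈ UHP → 0 ≤ (f z₁ z₂).im) {w ζ : ℂ} (hw : w ∈ UHP)
    (hζ : ζ ∈ closure (sector w)) : 0 ≤ (-(ζ * eta f w)).im := by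
  have hclosed : IsClosed {ζ : ℂ | 0 ≤ (-(ζ * eta f w)).im} :=
    isClosed_le continuous_const (by fun_prop)
  refine hclosed.closure_subset_iff.mpr (fun ξ hξ => ?_) hζ
  have hξ0 := ne_zero_of_mem_UHP hξ.2
  have : -(ξ * eta f w) = f (ξ / w) ξ := by
    rw [eta_eq_of_mem_sector hf hw hξ]
    field_simp
  simpa only [mem_ofPred_eq, this] using hf_pick _ _ hξ.1 hξ.2

lemma exp_mul_I_mul_eq_neg_div (x z : ℂ) : exp (x * I) * z = -(z / -exp (-x * I)) := by
  rw [div_neg, neg_neg, neg_mul, exp_neg, div_inv_eq_mul, mul_comm]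

end HomogeneousPick

open HomogeneousPick in
/-- If `f` is a holomorphic Pick function of two variables, homogeneous of
degree one, then `η(w) = e^{is} f(-e^{-is}/w, -e^{-is})` is well-defined (independent of `s`)
and both `η` and `w ↦ -w·η(w)` are Pick functions of one variable. -/
theorem stmt0 (f : ℂ → ℂ → ℂ)
    (hf_hol : DifferentiableOn ℂ (fun p : ℂ × ℂ => f p.1 p.2) (UHP ×ˢ UHP))
    (hf_pick : ∀ z₁ z₂ : ℂ, z₁ ∈ UHP → z₂ ∈ UHP → 0 ≤ (f z₁ z₂).im)
    (hf_hom : ∀ w z₁ z₂ : ℂ, z₁ ∈ UHP → z₂ ∈ UHP → w * z₁ ∈ UHP → w * z₂ ∈ UHP →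
      f (w * z₁) (w * z₂) = w * f z₁ z₂) :
    -- well-definedness: the formula is independent of the choice of s
    (∀ (s s' : ℝ) (w : ℂ),
        (-Complex.exp (-(s : ℂ) * I) / w) ∈ UHP → (-Complex.exp (-(s : ℂ) * I)) ∈ UHP →
        (-Complex.exp (-(s' : ℂ) * I) / w) ∈ UHP → (-Complex.exp (-(s' : ℂ) * I)) ∈ UHP →
        Complex.exp ((s : ℂ) * I) * f (-Complex.exp (-(s : ℂ) * I) / w) (-Complex.exp (-(s : ℂ) * I))
          = Complex.exp ((s' : ℂ) * I) *
              f (-Complex.exp (-(s' : ℂ) * I) / w) (-Complex.exp (-(s' : ℂ) * I))) ∧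
    -- existence of the Pick function η given by the formula
    ∃ η : ℂ → ℂ,
      (∀ (s : ℝ) (w : ℂ), w ∈ UHP →
        (-Complex.exp (-(s : ℂ) * I) / w) ∈ UHP → (-Complex.exp (-(s : ℂ) * I)) ∈ UHP →
        η w = Complex.exp ((s : ℂ) * I) *
          f (-Complex.exp (-(s : ℂ) * I) / w) (-Complex.exp (-(s : ℂ) * I))) ∧
      DifferentiableOn ℂ η UHP ∧
      (∀ w ∈ UHP, 0 ≤ (η w).im) ∧
      (∀ w ∈ UHP, 0 ≤ (-(w * η w)).im) := by
  have hf : HomogeneousOnUHP f := hf_hom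
  refine ⟨fun s s' w h₁ h₂ h₃ h₄ => ?_, eta f, fun s w hw h₁ h₂ => ?_, differentiableOn_eta hf_hol,
    fun w hw => ?_, fun w hw => ?_⟩
  · rw [exp_mul_I_mul_eq_neg_div, exp_mul_I_mul_eq_neg_div,
      hf.apply_div_eq_of_mem_sector ⟨h₁, h₂⟩ ⟨h₃, h₄⟩]
  · rw [exp_mul_I_mul_eq_neg_div]
    exact eta_eq_of_mem_sector hf hw ⟨h₁, h₂⟩
  · simpa using im_neg_mul_eta_nonneg hf hf_pick hw
      (segment_subset_closure_sector hw (left_mem_segment ℝ (-1) w))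
  · exact im_neg_mul_eta_nonneg hf hf_pick hw
      (segment_subset_closure_sector hw (right_mem_segment ℝ (-1) w))
end
end

section
/- Let μ be a finite positive Borel measure on [−1,1] and define f on Π² by f(z₁,z₂) = 4·∫_{−1}^{1} z₁z₂ / ((1+t)z₁ + (1−t)z₂) dμ(t). Then f(z₁,z₂) = (μ₀ − μ₁)z₁ + (μ₀ + μ₁)z₂ + (z₂ − z₁)·g((z₁+z₂)/(z₂−z₁)) for all z ∈ Π² with z₁ ≠ z₂, where μ₀ = μ([−1,1]), μ₁ = ∫ t dμ(t), and g(ζ) = ∫_{−1}^{1} (1−t²)/(t−ζ) dμ(t). -/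
open Complex Set MeasureTheory

/-! Put s = z₁ + z₂ and d = z₂ - z₁. The kernel's denominator is s - t d = -(t - s/d) d, and
4 z₁ z₂ = (s + t d)(s - t d) - d² (1 - t²), so pointwise on [-1, 1]
4 z₁ z₂ / (s - t d) = s + t d + d (1 - t²) / (t - s/d); integrating against μ gives the identity.
The denominator has positive imaginary part on [-1, 1], so both integrands are continuous there,
hence integrable against a finite measure carried by [-1, 1]. -/

theorem MeasureTheory.Integrable.of_continuousOn_of_ae_mem {X E : Type*} [TopologicalSpace X]
    [MeasurableSpace X] [OpensMeasurableSpace X] [T2Space X] [NormedAddCommGroup E]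
    {μ : Measure X} [IsFiniteMeasureOnCompacts μ] {f : X → E} {K : Set X}
    (hK : IsCompact K) (hf : ContinuousOn f K) (hμ : ∀ᵐ x ∂μ, x ∈ K) : Integrable f μ := by
  simpa only [IntegrableOn, Measure.restrict_eq_self_of_ae_mem hμ]
    using hf.integrableOn_compact (μ := μ) hK

theorem one_add_mul_add_one_sub_mul_pos {R : Type*} [Field R] [LinearOrder R]
    [IsStrictOrderedRing R] {a b t : R} (ha : 0 < a) (hb : 0 < b) (ht : t ∈ Icc (-1 : R) 1) :
    0 < (1 + t) * a + (1 - t) * b := by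
  obtain ⟨h1, h2⟩ := ht
  rcases le_total a b with hab | hab
  · nlinarith [mul_nonneg (sub_nonneg.2 h2) (sub_nonneg.2 hab)]
  · nlinarith [mul_nonneg (neg_le_iff_add_nonneg'.1 h1) (sub_nonneg.2 hab)]

theorem one_add_mul_add_one_sub_mul_ne_zero {z₁ z₂ : ℂ} (hz₁ : 0 < z₁.im) (hz₂ : 0 < z₂.im)
    {t : ℝ} (ht : t ∈ Icc (-1 : ℝ) 1) : (1 + (t : ℂ)) * z₁ + (1 - (t : ℂ)) * z₂ ≠ 0 := by
  have him : ((1 + (t : ℂ)) * z₁ + (1 - (t : ℂ)) * z₂).im = (1 + t) * z₁.im + (1 - t) * z₂.im := by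
    simp
  intro h
  exact (one_add_mul_add_one_sub_mul_pos hz₁ hz₂ ht).ne' (by rw [← him, h, zero_im])

theorem sub_div_sub_mul_sub {K : Type*} [Field K] {z₁ z₂ : K} (hne : z₂ - z₁ ≠ 0) (t : K) :
    (t - (z₁ + z₂) / (z₂ - z₁)) * (z₂ - z₁) = -((1 + t) * z₁ + (1 - t) * z₂) := by
  field_simp
  ring

theorem four_mul_div_eq_add_mul_div {K : Type*} [Field K] {z₁ z₂ t : K} (hne : z₂ - z₁ ≠ 0)
    (hD : (1 + t) * z₁ + (1 - t) * z₂ ≠ 0) :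
    4 * (z₁ * z₂ / ((1 + t) * z₁ + (1 - t) * z₂))
      = (z₁ + z₂) + t * (z₂ - z₁) + (z₂ - z₁) * ((1 - t ^ 2) / (t - (z₁ + z₂) / (z₂ - z₁))) := by
  rw [← mul_div_mul_right (1 - t ^ 2) _ hne, sub_div_sub_mul_sub hne, div_neg]
  linear_combination (z₁ + z₂ + t * (z₂ - z₁)) * mul_inv_cancel₀ hD

/-- the integral representation `f(z₁,z₂) = 4∫ z₁z₂/((1+t)z₁+(1-t)z₂) dμ(t)`
can be rewritten as `(μ₀-μ₁)z₁ + (μ₀+μ₁)z₂ + (z₂-z₁)g((z₁+z₂)/(z₂-z₁))` on Π² off the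
diagonal, where `g(ζ) = ∫ (1-t²)/(t-ζ) dμ(t)`. -/
theorem stmt3 (μ : Measure ℝ) [IsFiniteMeasure μ]
    (hsupp : μ (Set.Icc (-1 : ℝ) 1)ᶜ = 0)
    (z₁ z₂ : ℂ) (hz₁ : 0 < z₁.im) (hz₂ : 0 < z₂.im) (hne : z₁ ≠ z₂) :
    (4 : ℂ) * ∫ t : ℝ, z₁ * z₂ / ((1 + (t : ℂ)) * z₁ + (1 - (t : ℂ)) * z₂) ∂μ
      = (((μ Set.univ).toReal : ℂ) - ((∫ t : ℝ, t ∂μ : ℝ) : ℂ)) * z₁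
        + (((μ Set.univ).toReal : ℂ) + ((∫ t : ℝ, t ∂μ : ℝ) : ℂ)) * z₂
        + (z₂ - z₁) *
            ∫ t : ℝ, (1 - (t : ℂ) ^ 2) / ((t : ℂ) - (z₁ + z₂) / (z₂ - z₁)) ∂μ := by
  have hne' : z₂ - z₁ ≠ 0 := sub_ne_zero.2 hne.symm
  have hae : ∀ᵐ t ∂μ, t ∈ Icc (-1 : ℝ) 1 := mem_ae_iff.2 hsupp
  have hD := fun t (ht : t ∈ Icc (-1 : ℝ) 1) => one_add_mul_add_one_sub_mul_ne_zero hz₁ hz₂ ht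
  have hg : Integrable (fun t : ℝ => (1 - (t : ℂ) ^ 2) / ((t : ℂ) - (z₁ + z₂) / (z₂ - z₁))) μ := by
    refine .of_continuousOn_of_ae_mem isCompact_Icc (ContinuousOn.div (by fun_prop) (by fun_prop)
      fun t ht h0 => hD t ht ?_) hae
    rw [← neg_eq_zero, ← sub_div_sub_mul_sub hne', h0, zero_mul]
  have hid : Integrable (fun t : ℝ => (t : ℂ)) μ :=
    .of_continuousOn_of_ae_mem isCompact_Icc (by fun_prop) hae
  have hlin : Integrable (fun t : ℝ => (z₁ + z₂) + (t : ℂ) * (z₂ - z₁)) μ :=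
    (integrable_const _).add (hid.mul_const _)
  calc (4 : ℂ) * ∫ t : ℝ, z₁ * z₂ / ((1 + (t : ℂ)) * z₁ + (1 - (t : ℂ)) * z₂) ∂μ
      = ∫ t : ℝ, ((z₁ + z₂) + (t : ℂ) * (z₂ - z₁))
          + (z₂ - z₁) * ((1 - (t : ℂ) ^ 2) / ((t : ℂ) - (z₁ + z₂) / (z₂ - z₁))) ∂μ := by
        rw [← integral_const_mul]
        exact integral_congr_ae (hae.mono fun t ht => four_mul_div_eq_add_mul_div hne' (hD t ht))
    _ = _ := by
        rw [integral_add hlin (hg.const_mul _),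
          integral_add (integrable_const _) (hid.mul_const _), integral_const, integral_mul_const,
          integral_const_mul, integral_complex_ofReal, real_smul, measureReal_def]
        ring
end

section
/- Let μ be a finite positive Borel measure on [−1,1], μ₀ = μ([−1,1]), μ₁ = ∫ t dμ(t), g(ζ) = ∫_{−1}^{1}(1−t²)/(t−ζ)dμ(t), and let f(z₁,z₂) = (μ₀−μ₁)z₁ + (μ₀+μ₁)z₂ + (z₂−z₁)·g((z₁+z₂)/(z₂−z₁)) on Π² (extended continuously to z₁ = z₂). If there is C > 0 with |f(z₁,z₂)| ≤ C·max(|z₁|,|z₂|) for all z ∈ Π², then g is bounded on ℂ \ [−1,1]. Conversely if g is bounded then such a C exists. -/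
open Complex Set MeasureTheory

/-! The substitution `ζ = (z₁ + z₂) / (z₂ - z₁)` sends `Π²` minus the diagonal into
`ℂ \ [-1, 1]`, and every such `ζ` comes from the pair `z₁ = (ζ - 1) w / 2`, `z₂ = (ζ + 1) w / 2`
for a suitable `|w| = 1`, whose entries have size at most `(|ζ| + 1) / 2`. Since
`f = a z₁ + b z₂ + (z₂ - z₁) g(ζ)`, a bound `|g| ≤ M` gives `|f| ≤ (|a| + |b| + 2M) ‖z‖`;
conversely a linear bound on `f` bounds `g` on `|ζ| < 2` through these pairs, while for
`|ζ| ≥ 2` the integrand of `g` has modulus at most `1`, so `|g| ≤ μ₀` there. -/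

lemma add_div_sub_notMem_segment {z₁ z₂ : ℂ} (h₁ : 0 < z₁.im) (h₂ : 0 < z₂.im) (hne : z₁ ≠ z₂) :
    (z₁ + z₂) / (z₂ - z₁) ∉ (fun t : ℝ => (t : ℂ)) '' Icc (-1) 1 := by
  rintro ⟨t, ⟨ht₁, ht₂⟩, ht⟩
  have hmul : (t : ℂ) * (z₂ - z₁) = z₁ + z₂ :=
    (eq_div_iff (sub_ne_zero.2 hne.symm)).1 ht
  have him : t * (z₂.im - z₁.im) = z₁.im + z₂.im := by
    simpa using congrArg Complex.im hmul
  nlinarith [mul_nonneg (by linarith : 0 ≤ 1 + t) h₁.le,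
    mul_nonneg (by linarith : 0 ≤ 1 - t) h₂.le]

lemma exists_norm_eq_one_im_mul_pos {ζ : ℂ} (hζ : ζ ∉ (fun t : ℝ => (t : ℂ)) '' Icc (-1) 1) :
    ∃ w : ℂ, ‖w‖ = 1 ∧ 0 < ((ζ - 1) * w).im ∧ 0 < ((ζ + 1) * w).im := by
  rcases lt_trichotomy ζ.im 0 with hlt | heq | hgt
  · exact ⟨-1, by simp, by simpa using hlt, by simpa using hlt⟩
  · have hre : ζ.re < -1 ∨ 1 < ζ.re := by
      by_contra! h
      exact hζ ⟨ζ.re, ⟨h.1, h.2⟩, Complex.ext (by simp) (by simp [heq])⟩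
    rcases hre with hre | hre
    · exact ⟨-I, by simp, by simp [heq]; linarith, by simp [heq]; linarith⟩
    · exact ⟨I, by simp, by simp; linarith, by simp; linarith⟩
  · exact ⟨1, by simp, by simpa using hgt, by simpa using hgt⟩

lemma norm_one_sub_sq_div_sub_le_one {t : ℝ} (ht : t ∈ Icc (-1) 1) {ζ : ℂ} (hζ : 2 ≤ ‖ζ‖) :
    ‖(1 - (t : ℂ) ^ 2) / ((t : ℂ) - ζ)‖ ≤ 1 := by
  have ht' : |t| ≤ 1 := abs_le.2 ht
  have hnum : ‖1 - (t : ℂ) ^ 2‖ ≤ 1 := by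
    rw [show 1 - (t : ℂ) ^ 2 = ((1 - t ^ 2 : ℝ) : ℂ) by push_cast; ring, norm_real,
      Real.norm_of_nonneg (by nlinarith [abs_nonneg t, sq_abs t])]
    nlinarith
  have hden : 1 ≤ ‖(t : ℂ) - ζ‖ := by
    have := norm_sub_norm_le ζ (t : ℂ)
    rw [norm_sub_rev, norm_real, Real.norm_eq_abs] at this
    linarith
  rw [norm_div, div_le_one (by linarith)]
  linarith

lemma norm_integral_one_sub_sq_div_sub_le {μ : Measure ℝ} [IsFiniteMeasure μ]
    (hsupp : μ (Icc (-1 : ℝ) 1)ᶜ = 0) {ζ : ℂ} (hζ : 2 ≤ ‖ζ‖) :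
    ‖∫ t : ℝ, (1 - (t : ℂ) ^ 2) / ((t : ℂ) - ζ) ∂μ‖ ≤ μ.real univ := by
  have hae : ∀ᵐ t ∂μ, t ∈ Icc (-1 : ℝ) 1 := mem_ae_iff.2 hsupp
  simpa using norm_integral_le_of_norm_le_const
    (hae.mono fun t ht => norm_one_sub_sq_div_sub_le_one ht hζ)

lemma norm_le_of_norm_le_mul_max {f : ℂ → ℂ → ℂ} {g : ℂ → ℂ} {a b : ℂ}
    (hf : ∀ z₁ z₂ : ℂ, 0 < z₁.im → 0 < z₂.im → z₁ ≠ z₂ →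
      f z₁ z₂ = a * z₁ + b * z₂ + (z₂ - z₁) * g ((z₁ + z₂) / (z₂ - z₁)))
    {C : ℝ} (hC₀ : 0 ≤ C)
    (hC : ∀ z₁ z₂ : ℂ, 0 < z₁.im → 0 < z₂.im → ‖f z₁ z₂‖ ≤ C * max ‖z₁‖ ‖z₂‖)
    {ζ : ℂ} (hζ : ζ ∉ (fun t : ℝ => (t : ℂ)) '' Icc (-1) 1) :
    ‖g ζ‖ ≤ (C + ‖a‖ + ‖b‖) * ((‖ζ‖ + 1) / 2) := by
  obtain ⟨w, hw, h₁, h₂⟩ := exists_norm_eq_one_im_mul_pos hζ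
  set z₁ := (ζ - 1) * w / 2
  set z₂ := (ζ + 1) * w / 2
  have hw₀ : w ≠ 0 := norm_ne_zero_iff.1 (by simp [hw])
  have hsub : z₂ - z₁ = w := by ring
  have hζ_eq : (z₁ + z₂) / (z₂ - z₁) = ζ := by rw [hsub]; field_simp; ring
  have him₁ : 0 < z₁.im := by simpa [z₁] using h₁
  have him₂ : 0 < z₂.im := by simpa [z₂] using h₂
  have hfz := hf z₁ z₂ him₁ him₂ (fun h => hw₀ (by rw [← hsub, h, sub_self]))
  rw [hζ_eq, hsub] at hfz
  have hmax : max ‖z₁‖ ‖z₂‖ ≤ (‖ζ‖ + 1) / 2 := by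
    simp only [z₁, z₂, norm_div, norm_mul, hw, mul_one, Complex.norm_two]
    exact max_le (by linarith [norm_sub_le ζ 1, norm_one (α := ℂ)])
      (by linarith [norm_add_le ζ 1, norm_one (α := ℂ)])
  calc ‖g ζ‖ = ‖f z₁ z₂ - a * z₁ - b * z₂‖ := by
        rw [hfz, show a * z₁ + b * z₂ + w * g ζ - a * z₁ - b * z₂ = w * g ζ by ring,
          norm_mul, hw, one_mul]
    _ ≤ ‖f z₁ z₂‖ + ‖a‖ * ‖z₁‖ + ‖b‖ * ‖z₂‖ := by
        rw [← norm_mul, ← norm_mul]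
        exact (norm_sub_le _ _).trans (by gcongr; exact norm_sub_le _ _)
    _ ≤ C * max ‖z₁‖ ‖z₂‖ + ‖a‖ * max ‖z₁‖ ‖z₂‖ + ‖b‖ * max ‖z₁‖ ‖z₂‖ := by
        gcongr
        exacts [hC z₁ z₂ him₁ him₂, le_max_left _ _, le_max_right _ _]
    _ = (C + ‖a‖ + ‖b‖) * max ‖z₁‖ ‖z₂‖ := by ring
    _ ≤ (C + ‖a‖ + ‖b‖) * ((‖ζ‖ + 1) / 2) := by gcongr

lemma norm_le_mul_max_of_norm_le {f : ℂ → ℂ → ℂ} {g : ℂ → ℂ} {a b : ℂ}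
    (hf : ∀ z₁ z₂ : ℂ, 0 < z₁.im → 0 < z₂.im → z₁ ≠ z₂ →
      f z₁ z₂ = a * z₁ + b * z₂ + (z₂ - z₁) * g ((z₁ + z₂) / (z₂ - z₁)))
    (hdiag : ∀ z : ℂ, 0 < z.im → f z z = (a + b) * z)
    {M : ℝ} (hM₀ : 0 ≤ M) (hM : ∀ ζ ∉ (fun t : ℝ => (t : ℂ)) '' Icc (-1) 1, ‖g ζ‖ ≤ M)
    {z₁ z₂ : ℂ} (h₁ : 0 < z₁.im) (h₂ : 0 < z₂.im) :
    ‖f z₁ z₂‖ ≤ (‖a‖ + ‖b‖ + 2 * M) * max ‖z₁‖ ‖z₂‖ := by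
  rcases eq_or_ne z₁ z₂ with rfl | hne
  · rw [hdiag z₁ h₁, norm_mul, max_self]
    gcongr
    linarith [norm_add_le a b]
  have hsub : ‖z₂ - z₁‖ ≤ 2 * max ‖z₁‖ ‖z₂‖ := by
    linarith [norm_sub_le z₂ z₁, le_max_left ‖z₁‖ ‖z₂‖, le_max_right ‖z₁‖ ‖z₂‖]
  calc ‖f z₁ z₂‖
      ≤ ‖a‖ * ‖z₁‖ + ‖b‖ * ‖z₂‖ + ‖z₂ - z₁‖ * ‖g ((z₁ + z₂) / (z₂ - z₁))‖ := by
        rw [hf z₁ z₂ h₁ h₂ hne, ← norm_mul, ← norm_mul, ← norm_mul]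
        exact norm_add₃_le
    _ ≤ ‖a‖ * max ‖z₁‖ ‖z₂‖ + ‖b‖ * max ‖z₁‖ ‖z₂‖ + 2 * max ‖z₁‖ ‖z₂‖ * M := by
        gcongr
        exacts [le_max_left _ _, le_max_right _ _, hM _ (add_div_sub_notMem_segment h₁ h₂ hne)]
    _ = (‖a‖ + ‖b‖ + 2 * M) * max ‖z₁‖ ‖z₂‖ := by ring

/-- with `f(z₁,z₂) = (μ₀-μ₁)z₁ + (μ₀+μ₁)z₂ + (z₂-z₁)g((z₁+z₂)/(z₂-z₁))`
on Π² (extended continuously by `f(z,z) = 2μ₀z` on the diagonal), `f` is linearly bounded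
(|f(z)| ≤ C·max(|z₁|,|z₂|)) if and only if `g` is bounded on `ℂ \ [-1,1]`. -/
theorem stmt6 (μ : Measure ℝ) [IsFiniteMeasure μ]
    (hsupp : μ (Set.Icc (-1 : ℝ) 1)ᶜ = 0)
    (g : ℂ → ℂ)
    (hg : ∀ ζ : ℂ, ζ ∉ ((fun t : ℝ => (t : ℂ)) '' Set.Icc (-1 : ℝ) 1) →
      g ζ = ∫ t : ℝ, (1 - (t : ℂ) ^ 2) / ((t : ℂ) - ζ) ∂μ)
    (f : ℂ → ℂ → ℂ)
    (hf : ∀ z₁ z₂ : ℂ, 0 < z₁.im → 0 < z₂.im → z₁ ≠ z₂ →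
      f z₁ z₂ = (((μ Set.univ).toReal : ℂ) - ((∫ t : ℝ, t ∂μ : ℝ) : ℂ)) * z₁
        + (((μ Set.univ).toReal : ℂ) + ((∫ t : ℝ, t ∂μ : ℝ) : ℂ)) * z₂
        + (z₂ - z₁) * g ((z₁ + z₂) / (z₂ - z₁)))
    (hfdiag : ∀ z : ℂ, 0 < z.im →
      f z z = 2 * ((μ Set.univ).toReal : ℂ) * z) :
    (∃ C : ℝ, 0 < C ∧ ∀ z₁ z₂ : ℂ, 0 < z₁.im → 0 < z₂.im →
        ‖f z₁ z₂‖ ≤ C * max ‖z₁‖ ‖z₂‖) ↔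
    (∃ B : ℝ, ∀ ζ : ℂ, ζ ∉ ((fun t : ℝ => (t : ℂ)) '' Set.Icc (-1 : ℝ) 1) →
        ‖g ζ‖ ≤ B) := by
  set a : ℂ := ((μ univ).toReal : ℂ) - ((∫ t : ℝ, t ∂μ : ℝ) : ℂ)
  set b : ℂ := ((μ univ).toReal : ℂ) + ((∫ t : ℝ, t ∂μ : ℝ) : ℂ)
  have hdiag : ∀ z : ℂ, 0 < z.im → f z z = (a + b) * z := fun z hz => by
    rw [hfdiag z hz]; ring
  constructor
  · rintro ⟨C, hC₀, hC⟩
    refine ⟨max ((C + ‖a‖ + ‖b‖) * (3 / 2)) (μ.real univ), fun ζ hζ => ?_⟩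
    rcases le_or_gt 2 ‖ζ‖ with hbig | hsmall
    · rw [hg ζ hζ]
      exact (norm_integral_one_sub_sq_div_sub_le hsupp hbig).trans (le_max_right _ _)
    · refine (norm_le_of_norm_le_mul_max hf hC₀.le hC hζ).trans (le_max_of_le_left ?_)
      gcongr
      linarith
  · rintro ⟨M, hM⟩
    have hM₀ : 0 ≤ M :=
      (norm_nonneg _).trans (hM I (by rintro ⟨t, -, ht⟩; simpa using congrArg im ht))
    exact ⟨‖a‖ + ‖b‖ + 2 * M + 1, by positivity, fun z₁ z₂ h₁ h₂ =>
      (norm_le_mul_max_of_norm_le hf hdiag hM₀ hM h₁ h₂).trans (by gcongr ?_ * _; linarith)⟩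
end

section
/- Let μ be a finite positive Borel measure on [−1,1], and let f(z₁,z₂) = (μ₀−μ₁)z₁ + (μ₀+μ₁)z₂ + (z₂−z₁)·g((z₁+z₂)/(z₂−z₁)) on Π², where μ₀, μ₁ are the zeroth and first moments of μ and g(ζ) = ∫(1−t²)/(t−ζ)dμ(t). If there exists γ ≥ 0 such that Im f(z₁,z₂) ≤ γ·max(Im z₁, Im z₂) for all (z₁,z₂) ∈ Π², then (1−t²)dμ(t) is the zero measure (so g ≡ 0) and f is linear: f(z₁,z₂) = (μ₀−μ₁)z₁ + (μ₀+μ₁)z₂. -/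
open Complex Set MeasureTheory Filter Topology

/-! Write `ν = (1 - t²) dμ`. Substituting `z₁ = ζ - 1`, `z₂ = ζ + 1` turns the growth bound into
`2 Im g(ζ) ≤ γ Im ζ`, and `Im g(x + iy) = ∫ y / ((t - x)² + y²) dν(t)` is (π times) the Poisson
integral of `ν`. Since the kernel `x ↦ y / ((t - x)² + y²)` has mass at least `1/2` on
`[t, t + y]`, integrating the bound over `x ∈ [a, b + 1]` (Tonelli) gives
`ν [a, b] ≤ γ y (b - a + 1)` for `0 < y ≤ 1`; letting `y → 0` yields `ν = 0`, hence `g = 0`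
off `[-1, 1]` and `f` is linear. -/

theorem ofReal_half_le_setLIntegral_Icc_poisson (t : ℝ) {y : ℝ} (hy : 0 < y) :
    ENNReal.ofReal (1 / 2) ≤ ∫⁻ x in Icc t (t + y), ENNReal.ofReal (y / ((t - x) ^ 2 + y ^ 2)) :=
  calc ENNReal.ofReal (1 / 2)
      = ∫⁻ _ in Icc t (t + y), ENNReal.ofReal (1 / (2 * y)) := by
        rw [setLIntegral_const, Real.volume_Icc, add_sub_cancel_left,
          ← ENNReal.ofReal_mul (by positivity)]
        congr 1
        field_simp
    _ ≤ ∫⁻ x in Icc t (t + y), ENNReal.ofReal (y / ((t - x) ^ 2 + y ^ 2)) := by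
        refine setLIntegral_mono' measurableSet_Icc fun x hx => ENNReal.ofReal_le_ofReal ?_
        rw [div_le_div_iff₀ (by positivity) (by positivity)]
        nlinarith [hx.1, hx.2]

theorem measure_Icc_eq_zero_of_lintegral_poisson_le {ν : Measure ℝ} [SFinite ν] {C : ℝ}
    (h : ∀ x y : ℝ, 0 < y → ∫⁻ t, ENNReal.ofReal (y / ((t - x) ^ 2 + y ^ 2)) ∂ν
      ≤ ENNReal.ofReal (C * y)) (a b : ℝ) :
    ν (Icc a b) = 0 := by
  have hwindow : ∀ y ∈ Ioc (0 : ℝ) 1,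
      ν (Icc a b) * ENNReal.ofReal (1 / 2) ≤ ENNReal.ofReal (C * y) * volume (Icc a (b + 1)) := by
    rintro y ⟨hy, hy1⟩
    have hmeas : Measurable fun p : ℝ × ℝ => ENNReal.ofReal (y / ((p.1 - p.2) ^ 2 + y ^ 2)) := by
      fun_prop
    calc ν (Icc a b) * ENNReal.ofReal (1 / 2)
        = ∫⁻ _ in Icc a b, ENNReal.ofReal (1 / 2) ∂ν := by rw [setLIntegral_const, mul_comm]
      _ ≤ ∫⁻ t in Icc a b, (∫⁻ x in Icc a (b + 1),
            ENNReal.ofReal (y / ((t - x) ^ 2 + y ^ 2))) ∂ν := by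
        refine setLIntegral_mono' measurableSet_Icc fun t ht => ?_
        refine (ofReal_half_le_setLIntegral_Icc_poisson t hy).trans
          (lintegral_mono_set (Icc_subset_Icc (a₂ := a) (b₂ := b + 1) ?_ ?_)) <;>
          linarith [ht.1, ht.2]
      _ ≤ ∫⁻ t, (∫⁻ x in Icc a (b + 1), ENNReal.ofReal (y / ((t - x) ^ 2 + y ^ 2))) ∂ν :=
        setLIntegral_le_lintegral _ _
      _ = ∫⁻ x in Icc a (b + 1), ∫⁻ t, ENNReal.ofReal (y / ((t - x) ^ 2 + y ^ 2)) ∂ν :=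
        lintegral_lintegral_swap hmeas.aemeasurable
      _ ≤ ∫⁻ _ in Icc a (b + 1), ENNReal.ofReal (C * y) := lintegral_mono fun x => h x y hy
      _ = ENNReal.ofReal (C * y) * volume (Icc a (b + 1)) := setLIntegral_const _ _
  have hlim : Tendsto (fun y => ENNReal.ofReal (C * y) * volume (Icc a (b + 1))) (𝓝[>] 0)
      (𝓝 0) := by
    have h0 : Tendsto (fun y => ENNReal.ofReal (C * y)) (𝓝[>] 0) (𝓝 0) := by
      simpa using (ENNReal.tendsto_ofReal ((continuous_const_mul C).tendsto 0)).mono_left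
        nhdsWithin_le_nhds
    simpa using ENNReal.Tendsto.mul_const h0
      (.inr (measure_Icc_lt_top (μ := volume) (a := a) (b := b + 1)).ne)
  have hhalf : ν (Icc a b) * ENNReal.ofReal (1 / 2) = 0 :=
    le_antisymm (ge_of_tendsto hlim (eventually_of_mem (Ioc_mem_nhdsGT one_pos) hwindow)) bot_le
  simpa using hhalf

theorem MeasureTheory.Measure.eq_zero_of_lintegral_poisson_le {ν : Measure ℝ} [SFinite ν] {C : ℝ}
    (h : ∀ x y : ℝ, 0 < y → ∫⁻ t, ENNReal.ofReal (y / ((t - x) ^ 2 + y ^ 2)) ∂ν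
      ≤ ENNReal.ofReal (C * y)) :
    ν = 0 := by
  rw [← Measure.measure_univ_eq_zero, ← iUnion_Icc_intCast]
  exact measure_iUnion_null fun n => measure_Icc_eq_zero_of_lintegral_poisson_le h _ _

section OneSubSqKernel

variable {μ : Measure ℝ}

theorem im_one_sub_sq_div_ofReal_sub (t : ℝ) (ζ : ℂ) :
    ((1 - (t : ℂ) ^ 2) / ((t : ℂ) - ζ)).im
      = (1 - t ^ 2) * (ζ.im / ((t - ζ.re) ^ 2 + ζ.im ^ 2)) := by
  simp only [div_im, normSq_apply, sub_re, sub_im, one_re, one_im, ← ofReal_pow, ofReal_re,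
    ofReal_im]
  ring

theorem integrable_one_sub_sq_div_ofReal_sub [IsFiniteMeasure μ]
    (hμ : ∀ᵐ t ∂μ, t ∈ Icc (-1 : ℝ) 1) {ζ : ℂ} (hζ : ζ.im ≠ 0) :
    Integrable (fun t : ℝ => (1 - (t : ℂ) ^ 2) / ((t : ℂ) - ζ)) μ := by
  have hden : ∀ t : ℝ, (t : ℂ) - ζ ≠ 0 := fun t h => hζ (by simpa using congrArg im h)
  have hcont : Continuous fun t : ℝ => (1 - (t : ℂ) ^ 2) / ((t : ℂ) - ζ) :=
    .div (by fun_prop) (by fun_prop) hden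
  refine Integrable.mono' (integrable_const (1 / |ζ.im|)) hcont.aestronglyMeasurable ?_
  filter_upwards [hμ] with t ht
  rw [norm_div]
  have hnum : ‖(1 : ℂ) - (t : ℂ) ^ 2‖ ≤ 1 := by
    rw [← ofReal_one, ← ofReal_pow, ← ofReal_sub, norm_real, Real.norm_eq_abs, abs_le]
    constructor <;> nlinarith [ht.1, ht.2]
  have hden' : |ζ.im| ≤ ‖(t : ℂ) - ζ‖ := by
    simpa using abs_im_le_norm ((t : ℂ) - ζ)
  exact div_le_div₀ zero_le_one hnum (abs_pos.2 hζ) hden'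

theorem withDensity_one_sub_sq_eq_zero_of_im_integral_le [IsFiniteMeasure μ]
    (hμ : ∀ᵐ t ∂μ, t ∈ Icc (-1 : ℝ) 1) {C : ℝ}
    (h : ∀ ζ : ℂ, 0 < ζ.im → (∫ t, (1 - (t : ℂ) ^ 2) / ((t : ℂ) - ζ) ∂μ).im ≤ C * ζ.im) :
    μ.withDensity (fun t => ENNReal.ofReal (1 - t ^ 2)) = 0 := by
  refine Measure.eq_zero_of_lintegral_poisson_le (C := C) fun x y hy => ?_
  set ζ : ℂ := ⟨x, y⟩
  have hint := integrable_one_sub_sq_div_ofReal_sub hμ (ζ := ζ) hy.ne'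
  have hnn : 0 ≤ᵐ[μ] fun t => (1 - t ^ 2) * (y / ((t - x) ^ 2 + y ^ 2)) := by
    filter_upwards [hμ] with t ht
    have : 0 ≤ 1 - t ^ 2 := by nlinarith [ht.1, ht.2]
    positivity
  calc ∫⁻ t, ENNReal.ofReal (y / ((t - x) ^ 2 + y ^ 2)) ∂μ.withDensity _
      = ∫⁻ t, ENNReal.ofReal (1 - t ^ 2) * ENNReal.ofReal (y / ((t - x) ^ 2 + y ^ 2)) ∂μ :=
        lintegral_withDensity_eq_lintegral_mul _ (by fun_prop) (by fun_prop)
    _ = ∫⁻ t, ENNReal.ofReal ((1 - t ^ 2) * (y / ((t - x) ^ 2 + y ^ 2))) ∂μ := by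
        refine lintegral_congr fun t => (ENNReal.ofReal_mul' ?_).symm
        positivity
    _ = ENNReal.ofReal (∫ t, (1 - t ^ 2) * (y / ((t - x) ^ 2 + y ^ 2)) ∂μ) := by
        refine (ofReal_integral_eq_lintegral_ofReal ?_ hnn).symm
        exact hint.im.congr (ae_of_all _ fun t => im_one_sub_sq_div_ofReal_sub t ζ)
    _ = ENNReal.ofReal (∫ t, (1 - (t : ℂ) ^ 2) / ((t : ℂ) - ζ) ∂μ).im := by
        rw [← RCLike.im_to_complex, ← integral_im hint]
        simp only [RCLike.im_to_complex, im_one_sub_sq_div_ofReal_sub]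
        rfl
    _ ≤ ENNReal.ofReal (C * y) := ENNReal.ofReal_le_ofReal (h ζ hy)

theorem ae_one_sub_sq_eq_zero_of_withDensity_eq_zero (hμ : ∀ᵐ t ∂μ, t ∈ Icc (-1 : ℝ) 1)
    (h : μ.withDensity (fun t => ENNReal.ofReal (1 - t ^ 2)) = 0) :
    ∀ᵐ t ∂μ, 1 - t ^ 2 = 0 := by
  rw [withDensity_eq_zero_iff (by fun_prop)] at h
  filter_upwards [h, hμ] with t ht ht'
  rw [Pi.zero_apply, ENNReal.ofReal_eq_zero] at ht
  nlinarith [ht'.1, ht'.2]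

end OneSubSqKernel

theorem add_div_sub_notMem_image_Icc {z₁ z₂ : ℂ} (h₁ : 0 < z₁.im) (h₂ : 0 < z₂.im)
    (hne : z₁ ≠ z₂) : (z₁ + z₂) / (z₂ - z₁) ∉ ((fun t : ℝ => (t : ℂ)) '' Icc (-1 : ℝ) 1) := by
  rintro ⟨t, ht, hte⟩
  rw [eq_div_iff (sub_ne_zero.2 hne.symm)] at hte
  have him := congrArg im hte
  simp only [mul_im, ofReal_re, ofReal_im, sub_im, zero_mul, add_zero, add_im] at him
  nlinarith [mul_nonneg (neg_le_iff_add_nonneg'.1 ht.1) h₁.le, mul_nonneg (sub_nonneg.2 ht.2) h₂.le]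

theorem stmt8_general (μ : Measure ℝ) [IsFiniteMeasure μ]
    (hsupp : μ (Set.Icc (-1 : ℝ) 1)ᶜ = 0)
    (g : ℂ → ℂ)
    (hg : ∀ ζ : ℂ, ζ ∉ ((fun t : ℝ => (t : ℂ)) '' Set.Icc (-1 : ℝ) 1) →
      g ζ = ∫ t : ℝ, (1 - (t : ℂ) ^ 2) / ((t : ℂ) - ζ) ∂μ)
    (f : ℂ → ℂ → ℂ)
    (hf : ∀ z₁ z₂ : ℂ, 0 < z₁.im → 0 < z₂.im → z₁ ≠ z₂ →
      f z₁ z₂ = (((μ Set.univ).toReal : ℂ) - ((∫ t : ℝ, t ∂μ : ℝ) : ℂ)) * z₁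
        + (((μ Set.univ).toReal : ℂ) + ((∫ t : ℝ, t ∂μ : ℝ) : ℂ)) * z₂
        + (z₂ - z₁) * g ((z₁ + z₂) / (z₂ - z₁)))
    (hfdiag : ∀ z : ℂ, 0 < z.im →
      f z z = 2 * ((μ Set.univ).toReal : ℂ) * z)
    (γ : ℝ)
    (hbound : ∀ z₁ z₂ : ℂ, 0 < z₁.im → 0 < z₂.im →
      (f z₁ z₂).im ≤ γ * max z₁.im z₂.im) :
    μ.withDensity (fun t : ℝ => ENNReal.ofReal (1 - t ^ 2)) = 0 ∧
    (∀ ζ : ℂ, ζ ∉ ((fun t : ℝ => (t : ℂ)) '' Set.Icc (-1 : ℝ) 1) → g ζ = 0) ∧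
    (∀ z₁ z₂ : ℂ, 0 < z₁.im → 0 < z₂.im →
      f z₁ z₂ = (((μ Set.univ).toReal : ℂ) - ((∫ t : ℝ, t ∂μ : ℝ) : ℂ)) * z₁
        + (((μ Set.univ).toReal : ℂ) + ((∫ t : ℝ, t ∂μ : ℝ) : ℂ)) * z₂) := by
  have hμ : ∀ᵐ t ∂μ, t ∈ Icc (-1 : ℝ) 1 := mem_ae_iff.2 hsupp
  have hpick : ∀ ζ : ℂ, 0 < ζ.im →
      (∫ t, (1 - (t : ℂ) ^ 2) / ((t : ℂ) - ζ) ∂μ).im ≤ γ / 2 * ζ.im := by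
    intro ζ hζ
    have h₁ : 0 < (ζ - 1).im := by simpa using hζ
    have h₂ : 0 < (ζ + 1).im := by simpa using hζ
    have hne : ζ - 1 ≠ ζ + 1 := by rw [sub_eq_add_neg, Ne, add_right_inj]; norm_num
    have hb := hbound _ _ h₁ h₂
    rw [hf _ _ h₁ h₂ hne, hg _ (add_div_sub_notMem_image_Icc h₁ h₂ hne),
      show (ζ - 1 + (ζ + 1)) / (ζ + 1 - (ζ - 1)) = ζ by ring] at hb
    simp only [add_sub_sub_cancel, add_im, mul_im, sub_re, ofReal_re, sub_im, one_im, sub_zero,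
      ofReal_im, sub_self, one_re, zero_mul, add_zero, add_re, max_self] at hb
    have hμ₀ : 0 ≤ (μ univ).toReal * ζ.im := mul_nonneg ENNReal.toReal_nonneg hζ.le
    linarith
  have hν := withDensity_one_sub_sq_eq_zero_of_im_integral_le hμ hpick
  have hg₀ : ∀ ζ : ℂ, ζ ∉ ((fun t : ℝ => (t : ℂ)) '' Icc (-1 : ℝ) 1) → g ζ = 0 := by
    intro ζ hζ
    rw [hg ζ hζ]
    refine integral_eq_zero_of_ae ?_
    filter_upwards [ae_one_sub_sq_eq_zero_of_withDensity_eq_zero hμ hν] with t ht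
    simp [← ofReal_pow, ← ofReal_one, ← ofReal_sub, ht]
  refine ⟨hν, hg₀, fun z₁ z₂ h₁ h₂ => ?_⟩
  rcases eq_or_ne z₁ z₂ with rfl | hne
  · rw [hfdiag z₁ h₁]
    ring
  · rw [hf z₁ z₂ h₁ h₂ hne, hg₀ _ (add_div_sub_notMem_image_Icc h₁ h₂ hne), mul_zero, add_zero]

/-- if the homogeneous Pick function
`f(z₁,z₂) = (μ₀-μ₁)z₁ + (μ₀+μ₁)z₂ + (z₂-z₁)g((z₁+z₂)/(z₂-z₁))` satisfies
`Im f(z) ≤ γ·max(Im z₁, Im z₂)` on Π² for some `γ ≥ 0`, then `(1-t²)dμ(t)` is the zero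
measure, `g ≡ 0`, and `f` is linear. -/
theorem stmt8 (μ : Measure ℝ) [IsFiniteMeasure μ]
    (hsupp : μ (Set.Icc (-1 : ℝ) 1)ᶜ = 0)
    (g : ℂ → ℂ)
    (hg : ∀ ζ : ℂ, ζ ∉ ((fun t : ℝ => (t : ℂ)) '' Set.Icc (-1 : ℝ) 1) →
      g ζ = ∫ t : ℝ, (1 - (t : ℂ) ^ 2) / ((t : ℂ) - ζ) ∂μ)
    (f : ℂ → ℂ → ℂ)
    (hf : ∀ z₁ z₂ : ℂ, 0 < z₁.im → 0 < z₂.im → z₁ ≠ z₂ →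
      f z₁ z₂ = (((μ Set.univ).toReal : ℂ) - ((∫ t : ℝ, t ∂μ : ℝ) : ℂ)) * z₁
        + (((μ Set.univ).toReal : ℂ) + ((∫ t : ℝ, t ∂μ : ℝ) : ℂ)) * z₂
        + (z₂ - z₁) * g ((z₁ + z₂) / (z₂ - z₁)))
    (hfdiag : ∀ z : ℂ, 0 < z.im →
      f z z = 2 * ((μ Set.univ).toReal : ℂ) * z)
    (γ : ℝ) (hγ : 0 ≤ γ)
    (hbound : ∀ z₁ z₂ : ℂ, 0 < z₁.im → 0 < z₂.im →
      (f z₁ z₂).im ≤ γ * max z₁.im z₂.im) :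
    μ.withDensity (fun t : ℝ => ENNReal.ofReal (1 - t ^ 2)) = 0 ∧
    (∀ ζ : ℂ, ζ ∉ ((fun t : ℝ => (t : ℂ)) '' Set.Icc (-1 : ℝ) 1) → g ζ = 0) ∧
    (∀ z₁ z₂ : ℂ, 0 < z₁.im → 0 < z₂.im →
      f z₁ z₂ = (((μ Set.univ).toReal : ℂ) - ((∫ t : ℝ, t ∂μ : ℝ) : ℂ)) * z₁
        + (((μ Set.univ).toReal : ℂ) + ((∫ t : ℝ, t ∂μ : ℝ) : ℂ)) * z₂) :=
  stmt8_general μ hsupp g hg f hf hfdiag γ hbound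
end

section
/- Let g : Π → closure(Π) be holomorphic with Im g bounded on Π, and suppose 2·Im g(ζ) ≤ γ·Im ζ for all ζ ∈ Π and some γ ≥ 0. If Im g is the Poisson integral of a finite positive measure ν supported on [−1,1] (i.e., Im g(x+iy) = ∫ y/((x−t)²+y²) dν(t)), then ν = 0 and Im g ≡ 0 on Π. -/
/-!
Since the Poisson kernel `y / ((x - t)² + y²)` has mass at least `1` on `x ∈ [t - y, t + y]`,
integrating the Poisson integral of `ν` over `x ∈ [a - y, b + y]` and exchanging the integrals
bounds `ν [a, b]` from above. The hypothesis bounds the same integral by `γ y (b - a + 2y) / 2`,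
which tends to `0` as `y → 0⁺`. So `ν` vanishes on every compact interval, hence `ν = 0`, and then
`Im g`, the Poisson integral of `ν`, vanishes too.
-/

open Complex Set MeasureTheory Filter Topology
open scoped ENNReal

section PoissonKernel

variable {y : ℝ}

theorem continuous_poissonKernel (hy : 0 < y) :
    Continuous (fun p : ℝ × ℝ => y / ((p.1 - p.2) ^ 2 + y ^ 2)) :=
  continuous_const.div (by fun_prop) fun _ => by positivity

theorem integrable_poissonKernel {ν : Measure ℝ} [IsFiniteMeasure ν] (x : ℝ) (hy : 0 < y) :
    Integrable (fun t => y / ((x - t) ^ 2 + y ^ 2)) ν := by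
  refine Integrable.of_bound
    ((continuous_poissonKernel hy).comp (Continuous.prodMk_right x)).aestronglyMeasurable
    (y / y ^ 2) (Eventually.of_forall fun t => ?_)
  rw [Real.norm_of_nonneg (by positivity)]
  exact div_le_div_of_nonneg_left hy.le (by positivity) (by nlinarith)

/-- The kernel is at least `1 / (2y)` on `[t - y, t + y]`, an interval of length `2y`. -/
theorem one_le_setLIntegral_poissonKernel (t : ℝ) (hy : 0 < y) :
    1 ≤ ∫⁻ x in Icc (t - y) (t + y), ENNReal.ofReal (y / ((x - t) ^ 2 + y ^ 2)) := by
  calc (1 : ℝ≥0∞) = ∫⁻ _ in Icc (t - y) (t + y), ENNReal.ofReal (1 / (2 * y)) := by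
        rw [setLIntegral_const, Real.volume_Icc, ← ENNReal.ofReal_mul (by positivity)]
        rw [show 1 / (2 * y) * (t + y - (t - y)) = 1 by field_simp; ring, ENNReal.ofReal_one]
    _ ≤ ∫⁻ x in Icc (t - y) (t + y), ENNReal.ofReal (y / ((x - t) ^ 2 + y ^ 2)) := by
        refine setLIntegral_mono (by fun_prop) fun x hx => ENNReal.ofReal_le_ofReal ?_
        have hxt : (x - t) ^ 2 ≤ y ^ 2 := sq_le_sq' (by linarith [hx.1]) (by linarith [hx.2])
        rw [div_le_div_iff₀ (by positivity) (by positivity)]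
        nlinarith

theorem measure_Icc_le_of_lintegral_poissonKernel_le {ν : Measure ℝ} [SFinite ν] {c : ℝ≥0∞}
    (hy : 0 < y) (h : ∀ x, ∫⁻ t, ENNReal.ofReal (y / ((x - t) ^ 2 + y ^ 2)) ∂ν ≤ c)
    (a b : ℝ) : ν (Icc a b) ≤ c * volume (Icc (a - y) (b + y)) := by
  set F : ℝ → ℝ → ℝ≥0∞ := fun t x => ENNReal.ofReal (y / ((x - t) ^ 2 + y ^ 2))
  have hF : Measurable (Function.uncurry F) :=
    (ENNReal.continuous_ofReal.comp
      ((continuous_poissonKernel hy).comp continuous_swap)).measurable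
  calc ν (Icc a b) = ∫⁻ _ in Icc a b, 1 ∂ν := (setLIntegral_one _).symm
    _ ≤ ∫⁻ t in Icc a b, (∫⁻ x in Icc (a - y) (b + y), F t x) ∂ν := by
        refine setLIntegral_mono hF.lintegral_prod_right' fun t ht => ?_
        exact (one_le_setLIntegral_poissonKernel t hy).trans
          (lintegral_mono_set (Icc_subset_Icc (by linarith [ht.1]) (by linarith [ht.2])))
    _ ≤ ∫⁻ t, (∫⁻ x in Icc (a - y) (b + y), F t x) ∂ν := setLIntegral_le_lintegral _ _
    _ = ∫⁻ x in Icc (a - y) (b + y), (∫⁻ t, F t x ∂ν) :=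
        lintegral_lintegral_swap hF.aemeasurable
    _ ≤ ∫⁻ _ in Icc (a - y) (b + y), c := lintegral_mono fun x => h x
    _ = c * volume (Icc (a - y) (b + y)) := setLIntegral_const _ _

theorem eq_zero_of_integral_poissonKernel_le_mul {ν : Measure ℝ} [IsFiniteMeasure ν] {C : ℝ}
    (h : ∀ x y : ℝ, 0 < y → ∫ t, y / ((x - t) ^ 2 + y ^ 2) ∂ν ≤ C * y) : ν = 0 := by
  refine Measure.ext_of_Icc ν 0 fun a b _ => ?_
  rw [Measure.coe_zero, Pi.zero_apply]
  have hbound : ∀ y ∈ Ioc (0 : ℝ) 1,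
      ν (Icc a b) ≤ ENNReal.ofReal (C * y) * volume (Icc (a - 1) (b + 1)) := by
    intro y ⟨hy, hy1⟩
    have hwindow : Icc (a - y) (b + y) ⊆ Icc (a - 1) (b + 1) :=
      Icc_subset_Icc (by linarith) (by linarith)
    refine (measure_Icc_le_of_lintegral_poissonKernel_le hy (fun x => ?_) a b).trans
      (by gcongr)
    rw [← ofReal_integral_eq_lintegral_ofReal (integrable_poissonKernel x hy)
      (Eventually.of_forall fun t => by positivity)]
    exact ENNReal.ofReal_le_ofReal (h x y hy)
  have hlim : Tendsto (fun y : ℝ => ENNReal.ofReal (C * y) * volume (Icc (a - 1) (b + 1)))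
      (𝓝[>] 0) (𝓝 0) := by
    have hCy : Tendsto (fun y : ℝ => ENNReal.ofReal (C * y)) (𝓝[>] 0) (𝓝 0) :=
      ((ENNReal.continuous_ofReal.comp (continuous_const_mul C)).tendsto' 0 0
        (by simp)).mono_left nhdsWithin_le_nhds
    simpa only [zero_mul] using ENNReal.Tendsto.mul_const hCy (Or.inr measure_Icc_lt_top.ne)
  exact le_zero_iff.mp (ge_of_tendsto hlim
    (Filter.mem_of_superset (Ioc_mem_nhdsGT zero_lt_one) hbound))

end PoissonKernel

theorem stmt9_general (g : ℂ → ℂ)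
    (γ : ℝ)
    (hlin : ∀ ζ ∈ UHP, 2 * (g ζ).im ≤ γ * ζ.im)
    (ν : Measure ℝ) [IsFiniteMeasure ν]
    (hpoisson : ∀ x y : ℝ, 0 < y →
      (g ((x : ℂ) + (y : ℂ) * Complex.I)).im
        = ∫ t : ℝ, y / ((x - t) ^ 2 + y ^ 2) ∂ν) :
    ν = 0 ∧ ∀ ζ ∈ UHP, (g ζ).im = 0 := by
  have hν : ν = 0 := by
    refine eq_zero_of_integral_poissonKernel_le_mul (C := γ / 2) fun x y hy => ?_
    have hlin_xy := hlin (x + y * I) (by simpa [UHP] using hy)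
    rw [hpoisson x y hy] at hlin_xy
    simp only [add_im, ofReal_im, mul_im, ofReal_re, I_im, mul_one, I_re, mul_zero,
      zero_add] at hlin_xy
    linarith
  refine ⟨hν, fun ζ hζ => ?_⟩
  simpa [hν] using hpoisson ζ.re ζ.im hζ

/-- if `g : Π → closure(Π)` is holomorphic with `Im g` bounded,
`2·Im g(ζ) ≤ γ·Im ζ` on Π, and `Im g` is the Poisson integral of a finite positive
measure `ν` on `[-1,1]`, then `ν = 0` and `Im g ≡ 0` on Π. -/
theorem stmt9 (g : ℂ → ℂ)
    (hg_hol : DifferentiableOn ℂ g UHP)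
    (hg_pick : ∀ ζ ∈ UHP, 0 ≤ (g ζ).im)
    (hbdd : ∃ B : ℝ, ∀ ζ ∈ UHP, (g ζ).im ≤ B)
    (γ : ℝ) (hγ : 0 ≤ γ)
    (hlin : ∀ ζ ∈ UHP, 2 * (g ζ).im ≤ γ * ζ.im)
    (ν : Measure ℝ) [IsFiniteMeasure ν]
    (hsupp : ν (Set.Icc (-1 : ℝ) 1)ᶜ = 0)
    (hpoisson : ∀ x y : ℝ, 0 < y →
      (g ((x : ℂ) + (y : ℂ) * Complex.I)).im
        = ∫ t : ℝ, y / ((x - t) ^ 2 + y ^ 2) ∂ν) :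
    ν = 0 ∧ ∀ ζ ∈ UHP, (g ζ).im = 0 :=
  stmt9_general g γ hlin ν hpoisson
end

section
/- Let φ : 𝔻² → closure(𝔻) be holomorphic, τ ∈ 𝕋², and suppose γ = limsup_{z →^{nt} τ} (1−|φ(z)|)/(1−‖z‖) < ∞, where the limsup is over all sequences approaching τ nontangentially. Suppose φ has nontangential limit ω ∈ 𝕋 at τ and the directional derivative Dφ(τ)[h] exists for each direction h with Re(conj(τ_r)·h_r) < 0. Then the function f(z₁,z₂) := −i·conj(ω)·Dφ(τ)[(iτ₁z₁, iτ₂z₂)] satisfies Im f(z₁,z₂) ≤ γ·max(Im z₁, Im z₂) for all (z₁,z₂) ∈ Π². -/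
/-!
Fix `z₁, z₂ ∈ Π` and move along the ray `z(t) = τ + t h`, `h = (iτ₁z₁, iτ₂z₂)`, which points into
`𝔻²` and approaches `τ` nontangentially, with `(1 - ‖z(t)‖)/t → min (Im z₁, Im z₂)`. For `|ω| = 1`,
`1 - |c| ≤ 1 - Re(ω̄c) ≤ 1 - |c| + |c - ω|²/2`; along the ray `c = φ(z(t))` the error term is
`|φ - ω|²/t = o(1)`, so the Julia quotient `(1 - |φ|)/(1 - ‖z‖)` tends to
`-Re(ω̄ Dφ(τ)[h]) / min (Im z₁, Im z₂) = Im f(z₁, z₂) / min (Im z₁, Im z₂)`, and this is at most `γ`.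
-/

open Complex Set Filter

noncomputable section

/-- The open bidisk 𝔻². -/
def Bidisk : Set (ℂ × ℂ) := {z : ℂ × ℂ | ‖z.1‖ < 1 ∧ ‖z.2‖ < 1}

/-- The sup norm on ℂ². -/
def supNorm (z : ℂ × ℂ) : ℝ := max (‖z.1‖) (‖z.2‖)

/-- The distance from `z ∈ 𝔻²` to the boundary of the bidisk (in the sup norm). -/
def distBdy (z : ℂ × ℂ) : ℝ := min (1 - ‖z.1‖) (1 - ‖z.2‖)

open scoped Topology InnerProductSpace ComplexConjugate

theorem hasDerivAt_norm_add_smul {F : Type*} [NormedAddCommGroup F] [InnerProductSpace ℝ F]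
    {x : F} (hx : x ≠ 0) (v : F) :
    HasDerivAt (fun t : ℝ => ‖x + t • v‖) (⟪x, v⟫_ℝ / ‖x‖) 0 := by
  have hline : HasDerivAt (fun t : ℝ => x + t • v) v 0 := by
    simpa using ((hasDerivAt_id (0 : ℝ)).smul_const v).const_add x
  have hsqrt := hline.norm_sq.sqrt (by simpa using hx)
  simp only [Real.sqrt_sq (norm_nonneg _), zero_smul, add_zero] at hsqrt
  convert hsqrt using 1
  ring

theorem tendsto_one_sub_norm_add_mul_div {τ : ℂ} (hτ : ‖τ‖ = 1) (v : ℂ) :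
    Tendsto (fun t : ℝ => (1 - ‖τ + t * v‖) / t) (𝓝[>] 0) (𝓝 (-(conj τ * v).re)) := by
  have hτ0 : τ ≠ 0 := norm_ne_zero_iff.1 (by simp [hτ])
  have hslope := (hasDerivAt_norm_add_smul hτ0 v).tendsto_slope_zero_right.neg
  simp only [Complex.inner, hτ, zero_add, zero_smul, add_zero, div_one, real_smul] at hslope
  convert hslope using 2 with t
  · rw [smul_eq_mul]
    ring
  · rw [mul_comm]

theorem supNorm_smul (c : ℂ) (z : ℂ × ℂ) : supNorm (c • z) = ‖c‖ * supNorm z := by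
  simp [supNorm, mul_max_of_nonneg _ _ (norm_nonneg c)]

theorem distBdy_eq_one_sub_supNorm (z : ℂ × ℂ) : distBdy z = 1 - supNorm z :=
  min_sub_sub_left _ _ _

theorem mem_bidisk_iff_supNorm_lt_one {z : ℂ × ℂ} : z ∈ Bidisk ↔ supNorm z < 1 :=
  max_lt_iff.symm

theorem tendsto_one_sub_supNorm_add_smul_div {τ : ℂ × ℂ} (hτ : ‖τ.1‖ = 1 ∧ ‖τ.2‖ = 1)
    (h : ℂ × ℂ) :
    Tendsto (fun t : ℝ => (1 - supNorm (τ + (t : ℂ) • h)) / t) (𝓝[>] 0)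
      (𝓝 (min (-(conj τ.1 * h.1).re) (-(conj τ.2 * h.2).re))) := by
  refine ((tendsto_one_sub_norm_add_mul_div hτ.1 h.1).min
    (tendsto_one_sub_norm_add_mul_div hτ.2 h.2)).congr' ?_
  filter_upwards [self_mem_nhdsWithin] with t (ht : 0 < t)
  rw [min_div_div_right ht.le, min_sub_sub_left]
  rfl

theorem exists_nontangential_bound {τ h : ℂ × ℂ} {t : ℕ → ℝ} {m : ℝ} (hm : 0 < m)
    (ht : ∀ n, 0 < t n ∧ m < (1 - supNorm (τ + (t n : ℂ) • h)) / t n) :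
    ∃ M > (0 : ℝ), ∀ n, supNorm (τ + (t n : ℂ) • h - τ) ≤ M * distBdy (τ + (t n : ℂ) • h) := by
  have hh : 0 ≤ supNorm h := (norm_nonneg _).trans (le_max_left _ _)
  refine ⟨(supNorm h + 1) / m, by positivity, fun n => ?_⟩
  obtain ⟨htn, hlt⟩ := ht n
  rw [lt_div_iff₀ htn] at hlt
  rw [add_sub_cancel_left, supNorm_smul, norm_real, Real.norm_of_nonneg htn.le,
    distBdy_eq_one_sub_supNorm]
  calc t n * supNorm h ≤ (supNorm h + 1) * t n := by nlinarith
    _ = (supNorm h + 1) / m * (m * t n) := by field_simp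
    _ ≤ (supNorm h + 1) / m * (1 - supNorm (τ + (t n : ℂ) • h)) := by gcongr

section JuliaQuotient

variable {ω : ℂ} (hω : ‖ω‖ = 1)
include hω

theorem one_sub_norm_le_one_sub_re_conj_mul (c : ℂ) : 1 - ‖c‖ ≤ 1 - (conj ω * c).re := by
  have := re_le_norm (conj ω * c)
  rw [norm_mul, norm_conj, hω, one_mul] at this
  linarith

theorem one_sub_re_conj_mul_le (c : ℂ) : 1 - (conj ω * c).re ≤ 1 - ‖c‖ + ‖c - ω‖ ^ 2 / 2 := by
  have hsq : ‖c - ω‖ ^ 2 = ‖c‖ ^ 2 + 1 - 2 * (conj ω * c).re := by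
    rw [Complex.sq_norm, Complex.sq_norm, normSq_sub, normSq_eq_norm_sq ω, hω, mul_comm c]
    ring
  nlinarith [sq_nonneg (1 - ‖c‖)]

theorem tendsto_one_sub_norm_div {ι : Type*} {l : Filter ι} {c : ι → ℂ} {s t : ι → ℝ}
    {L : ℂ} {m : ℝ} (hc : Tendsto c l (𝓝 ω))
    (hL : Tendsto (fun i => (c i - ω) / (t i : ℂ)) l (𝓝 L))
    (hst : Tendsto (fun i => s i / t i) l (𝓝 m)) (hm : m ≠ 0) (ht : ∀ᶠ i in l, 0 < t i) :
    Tendsto (fun i => (1 - ‖c i‖) / s i) l (𝓝 (-(conj ω * L).re / m)) := by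
  have hωω : conj ω * ω = 1 := by rw [conj_mul', hω, ofReal_one, one_pow]
  have hre : Tendsto (fun i => (1 - (conj ω * c i).re) / t i) l (𝓝 (-(conj ω * L).re)) := by
    refine ((continuous_re.tendsto _).comp (hL.const_mul (conj ω))).neg.congr fun i => ?_
    simp only [Function.comp_apply, ← mul_div_assoc, div_ofReal_re, mul_sub, hωω, sub_re,
      one_re, ← neg_div, neg_sub]
  have herr : Tendsto (fun i => ‖(c i - ω) / (t i : ℂ)‖ * ‖c i - ω‖ / 2) l (𝓝 0) := by
    simpa using (hL.norm.mul (tendsto_sub_nhds_zero_iff.2 hc).norm).div_const 2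
  have hnum : Tendsto (fun i => (1 - ‖c i‖) / t i) l (𝓝 (-(conj ω * L).re)) := by
    have hlow := hre.sub herr
    rw [sub_zero] at hlow
    refine tendsto_of_tendsto_of_tendsto_of_le_of_le' hlow hre ?_ ?_
    · filter_upwards [ht] with i hti
      rw [norm_div, norm_real, Real.norm_of_nonneg hti.le, div_mul_eq_mul_div,
        ← sq, div_div, mul_comm (t i), ← div_div, ← sub_div]
      exact div_le_div_of_nonneg_right (by linarith [one_sub_re_conj_mul_le hω (c i)]) hti.le
    · filter_upwards [ht] with i hti
      exact div_le_div_of_nonneg_right (one_sub_norm_le_one_sub_re_conj_mul hω (c i)) hti.le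
  refine (hnum.div hst hm).congr' ?_
  filter_upwards [ht] with i hti
  exact div_div_div_cancel_right₀ hti.ne' _ _

end JuliaQuotient

theorem re_conj_mul_I_mul_mul {τ : ℂ} (hτ : ‖τ‖ = 1) (z : ℂ) :
    (conj τ * (I * τ * z)).re = -z.im := by
  have hττ : conj τ * τ = 1 := by rw [conj_mul', hτ, ofReal_one, one_pow]
  calc (conj τ * (I * τ * z)).re = (conj τ * τ * (I * z)).re := by ring_nf
    _ = -z.im := by simp [hττ]

theorem stmt12_general (φ : ℂ × ℂ → ℂ)
    (τ : ℂ × ℂ) (hτ : ‖τ.1‖ = 1 ∧ ‖τ.2‖ = 1)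
    (γ : ℝ) (hγ : 0 ≤ γ)
    -- nontangential limsup of the Julia quotient is at most γ
    (hlimsup : ∀ z : ℕ → ℂ × ℂ, (∀ n, z n ∈ Bidisk) →
      Tendsto z atTop (nhds τ) →
      (∃ M > (0 : ℝ), ∀ n, supNorm (z n - τ) ≤ M * distBdy (z n)) →
      Filter.limsup (fun n => (1 - ‖φ (z n)‖) / (1 - supNorm (z n))) atTop ≤ γ)
    (ω : ℂ) (hω : ‖ω‖ = 1)
    -- nontangential limit ω at τ
    (hωlim : ∀ z : ℕ → ℂ × ℂ, (∀ n, z n ∈ Bidisk) →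
      Tendsto z atTop (nhds τ) →
      (∃ M > (0 : ℝ), ∀ n, supNorm (z n - τ) ≤ M * distBdy (z n)) →
      Tendsto (fun n => φ (z n)) atTop (nhds ω))
    -- directional derivatives along directions pointing into the bidisk
    (D : ℂ × ℂ → ℂ)
    (hD : ∀ h : ℂ × ℂ,
      (starRingEnd ℂ τ.1 * h.1).re < 0 → (starRingEnd ℂ τ.2 * h.2).re < 0 →
      Tendsto (fun t : ℝ => (φ (τ + (t : ℂ) • h) - ω) / (t : ℂ))
        (nhdsWithin 0 (Set.Ioi 0)) (nhds (D h))) :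
    ∀ z₁ z₂ : ℂ, 0 < z₁.im → 0 < z₂.im →
      (-Complex.I * starRingEnd ℂ ω *
          D (Complex.I * τ.1 * z₁, Complex.I * τ.2 * z₂)).im
        ≤ γ * max z₁.im z₂.im := by
  intro z₁ z₂ hz₁ hz₂
  set h : ℂ × ℂ := (I * τ.1 * z₁, I * τ.2 * z₂)
  have hdir₁ : (conj τ.1 * h.1).re = -z₁.im := re_conj_mul_I_mul_mul hτ.1 z₁
  have hdir₂ : (conj τ.2 * h.2).re = -z₂.im := re_conj_mul_I_mul_mul hτ.2 z₂
  set m := min z₁.im z₂.im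
  have hm : 0 < m := lt_min hz₁ hz₂
  have hs : Tendsto (fun t : ℝ => (1 - supNorm (τ + (t : ℂ) • h)) / t) (𝓝[>] 0) (𝓝 m) := by
    simpa only [hdir₁, hdir₂, neg_neg] using tendsto_one_sub_supNorm_add_smul_div hτ h
  -- the hypotheses quantify over every term of a sequence, so pick `t n → 0⁺` inside the region
  -- `(1 - ‖z(t)‖)/t > m/2`, where the ray lies in `𝔻²` and approaches `τ` nontangentially
  obtain ⟨t, ht, hray⟩ := exists_seq_forall_of_frequently
    (eventually_mem_nhdsWithin.and (hs.eventually (lt_mem_nhds (half_lt_self hm)))).frequently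
  set z : ℕ → ℂ × ℂ := fun n => τ + (t n : ℂ) • h
  have hzB : ∀ n, z n ∈ Bidisk := fun n => mem_bidisk_iff_supNorm_lt_one.2 <| sub_pos.1 <|
    (div_pos_iff_of_pos_right (hray n).1).1 ((half_pos hm).trans (hray n).2)
  have hzτ : Tendsto z atTop (𝓝 τ) := by
    have : Continuous fun s : ℝ => τ + (s : ℂ) • h := by fun_prop
    have hlim := (this.tendsto 0).comp (ht.mono_right nhdsWithin_le_nhds)
    rwa [ofReal_zero, zero_smul, add_zero] at hlim
  have hnt := exists_nontangential_bound (half_pos hm) hray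
  have hQ := tendsto_one_sub_norm_div hω (hωlim z hzB hzτ hnt)
    ((hD h (by linarith) (by linarith)).comp ht) (hs.comp ht) hm.ne'
    (Eventually.of_forall fun n => (hray n).1)
  have hle : -(conj ω * D h).re / m ≤ γ := hQ.limsup_eq ▸ hlimsup z hzB hzτ hnt
  calc (-I * conj ω * D h).im = -(conj ω * D h).re := by
        rw [neg_mul, neg_mul, neg_im, mul_assoc, I_mul_im]
    _ ≤ γ * m := (div_le_iff₀ hm).1 hle
    _ ≤ γ * max z₁.im z₂.im := mul_le_mul_of_nonneg_left min_le_max hγ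

/-- if the nontangential limsup of the Julia quotient at `τ` is at most `γ`,
`φ` has nontangential limit `ω ∈ 𝕋` at `τ` and directional derivatives `Dφ(τ)[h]` for
directions `h` with `Re(conj(τ_r)·h_r) < 0`, then
`f(z₁,z₂) = -i·conj(ω)·Dφ(τ)[(iτ₁z₁, iτ₂z₂)]` satisfies
`Im f(z₁,z₂) ≤ γ·max(Im z₁, Im z₂)` on Π². -/
theorem stmt12 (φ : ℂ × ℂ → ℂ)
    (hφ_hol : DifferentiableOn ℂ φ Bidisk)
    (hφ_map : ∀ z ∈ Bidisk, ‖φ z‖ ≤ 1)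
    (τ : ℂ × ℂ) (hτ : ‖τ.1‖ = 1 ∧ ‖τ.2‖ = 1)
    (γ : ℝ) (hγ : 0 ≤ γ)
    -- nontangential limsup of the Julia quotient is at most γ
    (hlimsup : ∀ z : ℕ → ℂ × ℂ, (∀ n, z n ∈ Bidisk) →
      Tendsto z atTop (nhds τ) →
      (∃ M > (0 : ℝ), ∀ n, supNorm (z n - τ) ≤ M * distBdy (z n)) →
      Filter.limsup (fun n => (1 - ‖φ (z n)‖) / (1 - supNorm (z n))) atTop ≤ γ)
    (ω : ℂ) (hω : ‖ω‖ = 1)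
    -- nontangential limit ω at τ
    (hωlim : ∀ z : ℕ → ℂ × ℂ, (∀ n, z n ∈ Bidisk) →
      Tendsto z atTop (nhds τ) →
      (∃ M > (0 : ℝ), ∀ n, supNorm (z n - τ) ≤ M * distBdy (z n)) →
      Tendsto (fun n => φ (z n)) atTop (nhds ω))
    -- directional derivatives along directions pointing into the bidisk
    (D : ℂ × ℂ → ℂ)
    (hD : ∀ h : ℂ × ℂ,
      (starRingEnd ℂ τ.1 * h.1).re < 0 → (starRingEnd ℂ τ.2 * h.2).re < 0 →
      Tendsto (fun t : ℝ => (φ (τ + (t : ℂ) • h) - ω) / (t : ℂ))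
        (nhdsWithin 0 (Set.Ioi 0)) (nhds (D h))) :
    ∀ z₁ z₂ : ℂ, 0 < z₁.im → 0 < z₂.im →
      (-Complex.I * starRingEnd ℂ ω *
          D (Complex.I * τ.1 * z₁, Complex.I * τ.2 * z₂)).im
        ≤ γ * max z₁.im z₂.im :=
  stmt12_general φ τ hτ γ hγ hlimsup ω hω hωlim D hD
end
end

section
/- The function h ↦ −3h₁h₂/(h₁+2h₂), defined for h ∈ ℂ² with Re h₁ < 0 and Re h₂ < 0, is not bounded by any constant multiple of max(|h₁|,|h₂|): for every α > 0 there exists h with Re h₁ < 0, Re h₂ < 0 and |−3h₁h₂/(h₁+2h₂)| > α·max(|h₁|,|h₂|). (E.g., take h = (−ε+2i, −ε−i) with ε ↓ 0.) -/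
/-! The denominator `h₁ + 2h₂` vanishes on the boundary direction `(2i, -i)` while the numerator
does not. Along `h = (-ε + 2i, -ε - i)` the denominator is `-3ε`, so the quotient has size about
`‖h₁‖ / ε` while `max ‖h₁‖ ‖h₂‖ = ‖h₁‖`; taking `ε = 1 / (α + 1)` beats any `α`. -/

lemma mul_max_lt_norm_quotient {α : ℝ} {h₁ h₂ : ℂ} (hh₁ : h₁ ≠ 0) (hden : h₁ + 2 * h₂ ≠ 0)
    (hle : ‖h₂‖ ≤ ‖h₁‖) (hlt : α * ‖h₁ + 2 * h₂‖ < 3 * ‖h₂‖) :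
    α * max ‖h₁‖ ‖h₂‖ < ‖-3 * h₁ * h₂ / (h₁ + 2 * h₂)‖ := by
  have hquot : ‖-3 * h₁ * h₂ / (h₁ + 2 * h₂)‖ = ‖h₁‖ * (3 * ‖h₂‖) / ‖h₁ + 2 * h₂‖ := by
    simp only [norm_div, norm_mul, norm_neg, RCLike.norm_ofNat]
    ring
  rw [max_eq_left hle, hquot, lt_div_iff₀ (norm_pos_iff.mpr hden), mul_assoc, mul_left_comm]
  exact mul_lt_mul_of_pos_left hlt (norm_pos_iff.mpr hh₁)

lemma norm_mk_le_norm_mk {x y₁ y₂ : ℝ} (hy : |y₂| ≤ |y₁|) : ‖(⟨x, y₂⟩ : ℂ)‖ ≤ ‖(⟨x, y₁⟩ : ℂ)‖ := by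
  rw [Complex.norm_def, Complex.norm_def, Complex.normSq_mk, Complex.normSq_mk]
  refine Real.sqrt_le_sqrt (add_le_add_right ?_ _)
  rw [← abs_mul_abs_self y₁, ← abs_mul_abs_self y₂]
  exact mul_self_le_mul_self (abs_nonneg y₂) hy

/-- the directional derivative `h ↦ -3h₁h₂/(h₁+2h₂)` of `φ₃` at `(1,1)`,
defined for directions pointing into the bidisk, is not linearly bounded. -/
theorem stmt14 :
    ∀ α > (0 : ℝ), ∃ h₁ h₂ : ℂ, h₁.re < 0 ∧ h₂.re < 0 ∧
      ‖-3 * h₁ * h₂ / (h₁ + 2 * h₂)‖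
        > α * max ‖h₁‖ ‖h₂‖ := by
  intro α hα
  set ε : ℝ := 1 / (α + 1)
  have hε : 0 < ε := by positivity
  have hαε : α * ε < 1 := by
    rw [mul_one_div, div_lt_one (by positivity)]
    linarith
  refine ⟨⟨-ε, 2⟩, ⟨-ε, -1⟩, neg_lt_zero.mpr hε, neg_lt_zero.mpr hε, ?_⟩
  have hden : (⟨-ε, 2⟩ : ℂ) + 2 * ⟨-ε, -1⟩ = ((-3 * ε : ℝ) : ℂ) := by
    apply Complex.ext <;> simp; ring
  have hh₂ : 1 ≤ ‖(⟨-ε, -1⟩ : ℂ)‖ := by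
    simpa using Complex.abs_im_le_norm (⟨-ε, -1⟩ : ℂ)
  apply mul_max_lt_norm_quotient
  · exact ne_of_apply_ne Complex.im (by simp)
  · rw [hden]
    exact_mod_cast mul_ne_zero (by norm_num) hε.ne'
  · exact norm_mk_le_norm_mk (by norm_num)
  · rw [hden, Complex.norm_real, Real.norm_eq_abs, abs_of_neg (by linarith)]
    nlinarith
end

section
/- Let φ(z₁,z₂) = (−4z₁z₂² + z₂² + 3z₁z₂ − z₁ + z₂)/(z₂² − z₁z₂ − z₁ − 3z₂ + 4). Then φ(r,r) = r² for all r ∈ 𝔻 (where defined), and for every direction h with Re h₁ < 0, Re h₂ < 0, Dφ(1,1)[h] = lim_{t↓0}(φ(1+th₁,1+th₂)−1)/t = 2h₂; in particular the directional derivative at (1,1) is a linear function of h. -/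
open Complex Filter Topology

/-!
On the diagonal the denominator is `4 (1 - r)` and the numerator is `r² · 4 (1 - r)`.
Along the line `(1 + t h₁, 1 + t h₂)` the denominator is `t (t (h₂² - h₁ h₂) - 2 (h₁ + h₂))` and
numerator minus denominator is `-4 h₂ t² (h₁ + h₂ + t h₁ h₂)`, so the difference quotient is a
rational function of `t` that is continuous at `t = 0` with value `2 h₂` as soon as
`h₁ + h₂ ≠ 0`, which negative real parts guarantee.
-/

section RationalFunction

variable {K : Type*} [Field K]

def phiNum (z₁ z₂ : K) : K := -4 * z₁ * z₂ ^ 2 + z₂ ^ 2 + 3 * z₁ * z₂ - z₁ + z₂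

def phiDen (z₁ z₂ : K) : K := z₂ ^ 2 - z₁ * z₂ - z₁ - 3 * z₂ + 4

theorem phiDen_diag (r : K) : phiDen r r = 4 * (1 - r) := by
  unfold phiDen; ring

theorem phiNum_diag (r : K) : phiNum r r = r ^ 2 * phiDen r r := by
  unfold phiNum phiDen; ring

theorem phiNum_div_phiDen_diag [CharZero K] {r : K} (hr : r ≠ 1) :
    phiNum r r / phiDen r r = r ^ 2 := by
  have hden : phiDen r r ≠ 0 := by
    rw [phiDen_diag]
    exact mul_ne_zero (by norm_num) (sub_ne_zero.2 hr.symm)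
  rw [phiNum_diag, mul_div_cancel_right₀ _ hden]

theorem phiDen_one_add_mul (t h₁ h₂ : K) :
    phiDen (1 + t * h₁) (1 + t * h₂) = t * (t * (h₂ ^ 2 - h₁ * h₂) - 2 * (h₁ + h₂)) := by
  unfold phiDen; ring

theorem phiNum_sub_phiDen_one_add_mul (t h₁ h₂ : K) :
    phiNum (1 + t * h₁) (1 + t * h₂) - phiDen (1 + t * h₁) (1 + t * h₂) =
      t * t * (-4 * h₂ * (h₁ + h₂ + t * (h₁ * h₂))) := by
  unfold phiNum phiDen; ring

theorem phi_difference_quotient_eq {t h₁ h₂ : K} (ht : t ≠ 0)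
    (hq : t * (h₂ ^ 2 - h₁ * h₂) - 2 * (h₁ + h₂) ≠ 0) :
    (phiNum (1 + t * h₁) (1 + t * h₂) / phiDen (1 + t * h₁) (1 + t * h₂) - 1) / t =
      -4 * h₂ * (h₁ + h₂ + t * (h₁ * h₂)) / (t * (h₂ ^ 2 - h₁ * h₂) - 2 * (h₁ + h₂)) := by
  have hden : phiDen (1 + t * h₁) (1 + t * h₂) ≠ 0 := by
    rw [phiDen_one_add_mul]
    exact mul_ne_zero ht hq
  rw [div_sub_one hden, phiNum_sub_phiDen_one_add_mul, phiDen_one_add_mul, div_div,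
    mul_assoc t t, mul_comm _ t, mul_div_mul_left _ _ ht, mul_div_mul_left _ _ ht]

end RationalFunction

theorem tendsto_phi_difference_quotient {h₁ h₂ : ℂ} (hs : h₁ + h₂ ≠ 0) :
    Tendsto (fun t : ℝ => (phiNum (1 + (t : ℂ) * h₁) (1 + (t : ℂ) * h₂) /
        phiDen (1 + (t : ℂ) * h₁) (1 + (t : ℂ) * h₂) - 1) / (t : ℂ))
      (𝓝[≠] 0) (𝓝 (2 * h₂)) := by
  set q : ℝ → ℂ := fun t => (t : ℂ) * (h₂ ^ 2 - h₁ * h₂) - 2 * (h₁ + h₂)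
  have hq0 : q 0 ≠ 0 := by simpa [q] using hs
  have hq : ContinuousAt q 0 := by fun_prop
  have hlim : Tendsto (fun t : ℝ => -4 * h₂ * (h₁ + h₂ + (t : ℂ) * (h₁ * h₂)) / q t)
      (𝓝 0) (𝓝 (2 * h₂)) := by
    have hcont : ContinuousAt (fun t : ℝ => -4 * h₂ * (h₁ + h₂ + (t : ℂ) * (h₁ * h₂)) / q t) 0 :=
      (by fun_prop : ContinuousAt (fun t : ℝ => -4 * h₂ * (h₁ + h₂ + (t : ℂ) * (h₁ * h₂))) 0).div
        hq hq0
    convert hcont.tendsto using 2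
    simp only [q, ofReal_zero, zero_mul, zero_sub]
    field_simp
    ring
  refine (hlim.mono_left nhdsWithin_le_nhds).congr' ?_
  filter_upwards [nhdsWithin_le_nhds (hq.eventually_ne hq0), self_mem_nhdsWithin]
    with t hqt ht
  exact (phi_difference_quotient_eq (ofReal_ne_zero.2 ht) hqt).symm

/-- the function
`φ₁(z) = (-4z₁z₂² + z₂² + 3z₁z₂ - z₁ + z₂)/(z₂² - z₁z₂ - z₁ - 3z₂ + 4)` satisfies
`φ₁(r,r) = r²` on the diagonal of 𝔻, and its directional derivative at `(1,1)` in every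
direction `h` pointing into 𝔻² is `2h₂`, a linear function of `h`. -/
theorem stmt15
    (φ : ℂ → ℂ → ℂ)
    (hφ : ∀ z₁ z₂ : ℂ,
      φ z₁ z₂ = (-4 * z₁ * z₂ ^ 2 + z₂ ^ 2 + 3 * z₁ * z₂ - z₁ + z₂)
        / (z₂ ^ 2 - z₁ * z₂ - z₁ - 3 * z₂ + 4)) :
    (∀ r : ℂ, ‖r‖ < 1 → φ r r = r ^ 2) ∧
    (∀ h₁ h₂ : ℂ, h₁.re < 0 → h₂.re < 0 →
      Tendsto (fun t : ℝ => (φ (1 + (t : ℂ) * h₁) (1 + (t : ℂ) * h₂) - 1) / (t : ℂ))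
        (nhdsWithin 0 (Set.Ioi 0)) (nhds (2 * h₂))) := by
  obtain rfl : φ = fun z₁ z₂ => phiNum z₁ z₂ / phiDen z₁ z₂ := funext₂ hφ
  refine ⟨fun r hr => phiNum_div_phiDen_diag ?_, fun h₁ h₂ hre₁ hre₂ => ?_⟩
  · rintro rfl
    simp at hr
  · have hs : h₁ + h₂ ≠ 0 := fun h => by
      have := congrArg re h
      simp only [add_re, zero_re] at this
      linarith
    exact (tendsto_phi_difference_quotient hs).mono_left
      (nhdsWithin_mono _ fun t ht => ne_of_gt ht)
end

section
/- For ζ ∈ ℂ \ [−1,1], ∫_{−1}^{1} (1−t²)/(t−ζ) dt = (1−ζ²)·log((ζ−1)/(ζ+1)) − 2ζ, where log is the principal branch (which is well-defined since (ζ−1)/(ζ+1) omits the negative real axis for ζ ∉ [−1,1]), and this function is bounded on ℂ \ [−1,1]. -/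
/-!
For `ζ` off the segment `[a, b]`, the quotient `(ζ - t) / (ζ - a)` stays in the slit plane for
`t ∈ [a, b]`, so `t ↦ log ((ζ - t) / (ζ - a))` is a primitive of `(t - ζ)⁻¹` there. Writing
`(1 - t²) / (t - ζ) = (1 - ζ²) / (t - ζ) - (t + ζ)` gives the closed form.

For the bound, `|log ((ζ - 1) / (ζ + 1))| ≤ |log ‖ζ - 1‖| + |log ‖ζ + 1‖| + π` and boundedness of
`x |log x|` handle bounded `ζ`; for large `ζ`, `(ζ - 1) / (ζ + 1) = 1 + z` with `z = -2 / (ζ + 1)`,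
and `log (1 + z) = z + O(z²)` where `(1 - ζ²) z = 2ζ - 2` cancels the linear term `2ζ`.
-/

open Complex Set intervalIntegral

noncomputable section

theorem Real.mul_abs_log_le_one_add_sq {x : ℝ} (hx : 0 ≤ x) : x * |Real.log x| ≤ 1 + x ^ 2 := by
  rcases hx.eq_or_lt with rfl | hx
  · simp
  rcases le_total x 1 with hx1 | hx1
  · have := Real.abs_log_mul_self_lt x hx hx1
    rw [abs_mul, abs_of_pos hx] at this
    nlinarith
  · rw [abs_of_nonneg (Real.log_nonneg hx1)]
    nlinarith [Real.log_le_sub_one_of_pos hx]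

theorem Real.abs_log_div_le (x y : ℝ) : |Real.log (x / y)| ≤ |Real.log x| + |Real.log y| := by
  rcases eq_or_ne x 0 with rfl | hx
  · simp
  rcases eq_or_ne y 0 with rfl | hy
  · simp
  rw [Real.log_div hx hy]
  exact abs_sub _ _

namespace Complex

open scoped ComplexOrder in
theorem div_sub_mem_slitPlane {a b t : ℝ} {ζ : ℂ} (hζ : ζ ∉ ofReal '' Icc a b)
    (ht : t ∈ Icc a b) : (ζ - t) / (ζ - a) ∈ slitPlane := by
  have ha : ζ - a ≠ 0 := sub_ne_zero.2 fun h ↦ hζ ⟨a, ⟨le_rfl, ht.1.trans ht.2⟩, h.symm⟩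
  rw [mem_slitPlane_iff_not_le_zero]
  intro hle
  obtain ⟨r, hr, hw⟩ : ∃ r : ℝ, r ≤ 0 ∧ (ζ - t) / (ζ - a) = r :=
    ⟨_, nonpos_iff.1 hle |>.1, ext rfl (by simpa using nonpos_iff.1 hle |>.2)⟩
  -- `ζ = (t - r a) / (1 - r)` is a convex combination of `a` and `t`
  have h1r : 0 < 1 - r := by linarith
  refine hζ ⟨(t - r * a) / (1 - r), ⟨?_, ?_⟩, ?_⟩
  · rw [le_div_iff₀ h1r]; nlinarith [ht.1]
  · rw [div_le_iff₀ h1r]; nlinarith [ht.1, ht.2]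
  · rw [div_eq_iff ha] at hw
    have : (1 - r : ℂ) ≠ 0 := by exact_mod_cast h1r.ne'
    push_cast
    rw [div_eq_iff this]
    linear_combination -hw

theorem integral_inv_sub_of_notMem {a b : ℝ} (hab : a ≤ b) {ζ : ℂ} (hζ : ζ ∉ ofReal '' Icc a b) :
    ∫ t in a..b, ((t : ℂ) - ζ)⁻¹ = log ((ζ - b) / (ζ - a)) := by
  have hne : ∀ t ∈ uIcc a b, (t : ℂ) - ζ ≠ 0 := by
    rw [uIcc_of_le hab]
    exact fun t ht h ↦ hζ ⟨t, ht, (sub_eq_zero.1 h)⟩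
  have ha : ζ - a ≠ 0 := by simpa [neg_sub] using neg_ne_zero.2 (hne a left_mem_uIcc)
  have hderiv : ∀ t ∈ uIcc a b,
      HasDerivAt (fun t : ℝ ↦ log ((ζ - t) / (ζ - a))) ((t : ℂ) - ζ)⁻¹ t := by
    intro t ht
    have hinner : HasDerivAt (fun z : ℂ ↦ (ζ - z) / (ζ - a)) (-1 / (ζ - a)) t :=
      ((hasDerivAt_id' _).const_sub ζ).div_const _
    convert (hinner.clog (div_sub_mem_slitPlane hζ (uIcc_of_le hab ▸ ht))).comp_ofReal using 1
    rw [div_div_div_cancel_right₀ ha, neg_div, ← div_neg, neg_sub, one_div]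
  have hint : IntervalIntegrable (fun t : ℝ ↦ ((t : ℂ) - ζ)⁻¹) MeasureTheory.volume a b :=
    (ContinuousOn.inv₀ (by fun_prop) hne).intervalIntegrable
  rw [integral_eq_sub_of_hasDerivAt hderiv hint, div_self ha, log_one, sub_zero]

theorem norm_log_le (z : ℂ) : ‖log z‖ ≤ |Real.log ‖z‖| + Real.pi := by
  calc ‖log z‖ ≤ |(log z).re| + |(log z).im| := norm_le_abs_re_add_abs_im _
    _ ≤ |Real.log ‖z‖| + Real.pi := by
      rw [log_re, log_im]
      exact add_le_add_right (abs_arg_le_pi z) _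

end Complex

theorem integral_one_sub_sq_div_sub {ζ : ℂ} (hζ : ζ ∉ ofReal '' Icc (-1) 1) :
    ∫ t in (-1 : ℝ)..1, (1 - (t : ℂ) ^ 2) / ((t : ℂ) - ζ)
      = (1 - ζ ^ 2) * log ((ζ - 1) / (ζ + 1)) - 2 * ζ := by
  have hne : ∀ t ∈ uIcc (-1 : ℝ) 1, (t : ℂ) - ζ ≠ 0 := by
    rw [uIcc_of_le (by norm_num)]
    exact fun t ht h ↦ hζ ⟨t, ht, (sub_eq_zero.1 h)⟩
  have hsplit : EqOn (fun t : ℝ ↦ (1 - (t : ℂ) ^ 2) / ((t : ℂ) - ζ))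
      (fun t : ℝ ↦ (1 - ζ ^ 2) * ((t : ℂ) - ζ)⁻¹ - ((t : ℂ) + ζ)) (uIcc (-1) 1) := by
    intro t ht
    have := hne t ht
    field_simp
    ring
  have hinv : IntervalIntegrable (fun t : ℝ ↦ (1 - ζ ^ 2) * ((t : ℂ) - ζ)⁻¹) MeasureTheory.volume
      (-1) 1 :=
    (ContinuousOn.inv₀ (by fun_prop) hne).intervalIntegrable.const_mul _
  have hpoly : ∫ t in (-1 : ℝ)..1, ((t : ℂ) + ζ) = 2 * ζ := by
    rw [integral_add (Continuous.intervalIntegrable (by fun_prop) _ _) intervalIntegrable_const,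
      intervalIntegral.integral_ofReal]
    norm_num
  rw [integral_congr hsplit, integral_sub hinv (Continuous.intervalIntegrable (by fun_prop) _ _),
    integral_const_mul, integral_inv_sub_of_notMem (by norm_num) hζ, hpoly]
  norm_num

theorem norm_one_sub_sq_mul_log_le (ζ : ℂ) :
    ‖(1 - ζ ^ 2) * log ((ζ - 1) / (ζ + 1))‖
      ≤ ‖ζ + 1‖ * (1 + ‖ζ - 1‖ ^ 2) + ‖ζ - 1‖ * (1 + ‖ζ + 1‖ ^ 2)
        + Real.pi * ‖ζ - 1‖ * ‖ζ + 1‖ := by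
  set a := ‖ζ - 1‖
  set b := ‖ζ + 1‖
  have hlog : ‖log ((ζ - 1) / (ζ + 1))‖ ≤ |Real.log a| + |Real.log b| + Real.pi :=
    (norm_log_le _).trans (by rw [norm_div]; gcongr; exact Real.abs_log_div_le a b)
  calc ‖(1 - ζ ^ 2) * log ((ζ - 1) / (ζ + 1))‖
      = a * b * ‖log ((ζ - 1) / (ζ + 1))‖ := by
        rw [norm_mul, show 1 - ζ ^ 2 = -((ζ - 1) * (ζ + 1)) by ring, norm_neg, norm_mul]
    _ ≤ a * b * (|Real.log a| + |Real.log b| + Real.pi) := by gcongr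
    _ = b * (a * |Real.log a|) + a * (b * |Real.log b|) + Real.pi * a * b := by ring
    _ ≤ b * (1 + a ^ 2) + a * (1 + b ^ 2) + Real.pi * a * b := by
        gcongr <;> exact Real.mul_abs_log_le_one_add_sq (norm_nonneg _)

theorem norm_one_sub_sq_mul_log_sub_le_of_four_le {ζ : ℂ} (hζ : 4 ≤ ‖ζ + 1‖) :
    ‖(1 - ζ ^ 2) * log ((ζ - 1) / (ζ + 1)) - 2 * ζ‖ ≤ 8 := by
  set b := ‖ζ + 1‖
  have hb : 0 < b := by linarith
  set z : ℂ := -2 / (ζ + 1)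
  have hz : ‖z‖ = 2 / b := by simp [z, b]
  have hz2 : ‖z‖ ≤ 1 / 2 := by rw [hz, div_le_div_iff₀ hb two_pos]; linarith
  have hR : ‖log (1 + z) - z‖ ≤ 4 / b ^ 2 :=
    calc ‖log (1 + z) - z‖ ≤ ‖z‖ ^ 2 * (1 - ‖z‖)⁻¹ / 2 := norm_log_one_add_sub_self_le (by linarith)
      _ ≤ ‖z‖ ^ 2 * 2 / 2 := by gcongr; rw [inv_le_comm₀ (by linarith) two_pos]; linarith
      _ = 4 / b ^ 2 := by rw [hz]; ring
  have hg : (1 - ζ ^ 2) * log ((ζ - 1) / (ζ + 1)) - 2 * ζ = (1 - ζ ^ 2) * (log (1 + z) - z) - 2 := by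
    have hb0 : ζ + 1 ≠ 0 := norm_pos_iff.1 hb
    have hw : (ζ - 1) / (ζ + 1) = 1 + z := by simp only [z]; field_simp; ring
    have hz' : (1 - ζ ^ 2) * z = 2 * ζ - 2 := by simp only [z]; field_simp; ring
    rw [hw]
    linear_combination hz'
  have hab : ‖1 - ζ ^ 2‖ ≤ (b + 2) * b := by
    rw [show 1 - ζ ^ 2 = -((ζ + 1 - 2) * (ζ + 1)) by ring, norm_neg, norm_mul]
    gcongr
    exact (norm_sub_le _ _).trans (by simp [b])
  rw [hg]
  calc ‖(1 - ζ ^ 2) * (log (1 + z) - z) - 2‖ ≤ (b + 2) * b * (4 / b ^ 2) + 2 := by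
        refine (norm_sub_le _ _).trans ?_
        rw [norm_mul]
        norm_num
        gcongr
    _ = 6 + 8 / b := by field_simp; ring
    _ ≤ 8 := by linarith [(div_le_iff₀ hb).2 (by linarith : (8 : ℝ) ≤ 2 * b)]

theorem norm_one_sub_sq_mul_log_sub_le (ζ : ℂ) :
    ‖(1 - ζ ^ 2) * log ((ζ - 1) / (ζ + 1)) - 2 * ζ‖ ≤ 400 := by
  rcases le_or_gt 4 ‖ζ + 1‖ with hfar | hnear
  · linarith [norm_one_sub_sq_mul_log_sub_le_of_four_le hfar]
  have hζ : ‖ζ‖ ≤ 5 := by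
    have := norm_sub_le (ζ + 1) 1
    simp only [add_sub_cancel_right, norm_one] at this
    linarith
  have ha : ‖ζ - 1‖ ≤ 6 := (norm_sub_le _ _).trans (by simp only [norm_one]; linarith)
  calc ‖(1 - ζ ^ 2) * log ((ζ - 1) / (ζ + 1)) - 2 * ζ‖
      ≤ ‖(1 - ζ ^ 2) * log ((ζ - 1) / (ζ + 1))‖ + 2 * ‖ζ‖ := by
        refine (norm_sub_le _ _).trans_eq ?_
        rw [norm_mul (2 : ℂ), Complex.norm_two]
    _ ≤ 4 * (1 + 6 ^ 2) + 6 * (1 + 4 ^ 2) + 4 * 6 * 4 + 2 * 5 := by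
        grw [norm_one_sub_sq_mul_log_le, hnear.le, ha, hζ, Real.pi_le_four]
    _ ≤ 400 := by norm_num

/-- for `ζ ∈ ℂ \ [-1,1]`,
`∫_{-1}^{1} (1-t²)/(t-ζ) dt = (1-ζ²)·log((ζ-1)/(ζ+1)) - 2ζ` (principal branch of log),
and this function is bounded on `ℂ \ [-1,1]`. -/
theorem stmt16 :
    (∀ ζ : ℂ, ζ ∉ ((fun t : ℝ => (t : ℂ)) '' Set.Icc (-1 : ℝ) 1) →
      (∫ t in (-1 : ℝ)..1, (1 - (t : ℂ) ^ 2) / ((t : ℂ) - ζ))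
        = (1 - ζ ^ 2) * Complex.log ((ζ - 1) / (ζ + 1)) - 2 * ζ) ∧
    ∃ B : ℝ, ∀ ζ : ℂ, ζ ∉ ((fun t : ℝ => (t : ℂ)) '' Set.Icc (-1 : ℝ) 1) →
      ‖(1 - ζ ^ 2) * Complex.log ((ζ - 1) / (ζ + 1)) - 2 * ζ‖ ≤ B :=
  ⟨fun _ hζ ↦ integral_one_sub_sq_div_sub hζ, 400, fun ζ _ ↦ norm_one_sub_sq_mul_log_sub_le ζ⟩
end
end

section
/- Let φ : 𝔻² → closure(𝔻) be a rational function, τ ∈ 𝕋² a B point for φ, and suppose the directional derivative Dφ(τ)[h] (which exists for all directions h into 𝔻² and equals −ω·conj(τ₂)h₂·η(conj(τ₂)h₂/(conj(τ₁)h₁)) for a function η with η and −wη(w) in the Pick class) is a rational function of h and satisfies |Dφ(τ)[h]| ≤ α·max(|h₁|,|h₂|) for some α > 0. Then Dφ(τ)[h] is a linear function of h, i.e., there exists λ ∈ ℂ² with Dφ(τ)[h] = λ₁h₁ + λ₂h₂ for all directions h into 𝔻². -/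
/-!
In the coordinates `u = -conj τ₁ h₁`, `v = -conj τ₂ h₂` the directions into 𝔻² form the product of
two open right half-planes, and `D h = u g(v / u)` with `g w = ω w η(w)`. Restricting the
rational function `D` to the lines `(c, c w)` shows that `c g` agrees with a rational function of
`w` on the half-plane `Re (c w) > 0`; all these rational functions are the same up to the factor
`c`, so `g = P / Q` on the whole slit plane for one pair of polynomials. The linear bound
`|g w| ≤ α max(1, |w|)` then forces `Q` to divide `P` (a pole would be approached from the slit
plane) and the quotient to have degree at most one, i.e. `g` is affine and `D` is linear.
-/

open Complex Set Filter

noncomputable section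

/-- `h` is a direction pointing into 𝔻² at `τ`. -/
def IntoBidisk (τ h : ℂ × ℂ) : Prop :=
  ∃ t₀ > (0 : ℝ), ∀ t : ℝ, 0 < t → t < t₀ → τ + (t : ℂ) • h ∈ Bidisk

open Topology ComplexConjugate Bornology Asymptotics

lemma Complex.conj_mul_self_of_norm_eq_one {z : ℂ} (hz : ‖z‖ = 1) : conj z * z = 1 := by
  rw [conj_mul', hz]
  simp

lemma Complex.norm_add_ofReal_mul_sq (z h : ℂ) (t : ℝ) :
    ‖z + t * h‖ ^ 2 = ‖z‖ ^ 2 + 2 * t * (conj z * h).re + t ^ 2 * ‖h‖ ^ 2 := by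
  simp only [← normSq_eq_norm_sq, normSq_apply, add_re, add_im, mul_re, mul_im, ofReal_re,
    ofReal_im, conj_re, conj_im]
  ring

lemma Complex.eventually_norm_add_mul_lt_one_iff {z h : ℂ} (hz : ‖z‖ = 1) :
    (∀ᶠ t : ℝ in 𝓝[>] 0, ‖z + t * h‖ < 1) ↔ (conj z * h).re < 0 := by
  have key : ∀ t : ℝ, 0 < t → (‖z + t * h‖ < 1 ↔ 2 * (conj z * h).re + t * ‖h‖ ^ 2 < 0) := by
    intro t ht
    rw [← sq_lt_one_iff₀ (norm_nonneg _), norm_add_ofReal_mul_sq, hz]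
    constructor <;> intro H <;> nlinarith
  constructor
  · intro H
    obtain ⟨t, ht, ht0⟩ := (H.and self_mem_nhdsWithin).exists
    nlinarith [(key t ht0).1 ht, sq_nonneg ‖h‖]
  · intro H
    have hlim : Tendsto (fun t : ℝ => 2 * (conj z * h).re + t * ‖h‖ ^ 2) (𝓝[>] 0)
        (𝓝 (2 * (conj z * h).re)) := by
      have : Continuous (fun t : ℝ => 2 * (conj z * h).re + t * ‖h‖ ^ 2) := by fun_prop
      simpa using (this.tendsto 0).mono_left nhdsWithin_le_nhds
    filter_upwards [hlim.eventually_lt_const (show _ < (0 : ℝ) by linarith),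
      self_mem_nhdsWithin] with t ht ht0
    exact (key t ht0).2 ht

lemma Complex.dense_slitPlane : Dense slitPlane := by
  refine dense_iff_closure_eq.2 (eq_univ_of_forall fun z => ?_)
  rcases le_or_gt 0 z.im with h | h
  · refine closure_mono (s := {w : ℂ | 0 < w.im}) (fun w hw => ?_)
      ((closure_setOfPred_lt_im 0).symm ▸ h)
    exact mem_slitPlane_iff.2 (Or.inr (ne_of_gt hw))
  · exact subset_closure (mem_slitPlane_iff.2 (Or.inr h.ne))

lemma Complex.exists_re_pos_and_re_mul_pos {w : ℂ} (hw : w ∈ slitPlane) :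
    ∃ c : ℂ, 0 < c.re ∧ 0 < (c * w).re := by
  have hw0 : 0 < ‖w‖ := norm_pos_iff.2 (slitPlane_ne_zero hw)
  have hre : 0 < w.re + ‖w‖ := by
    rcases mem_slitPlane_iff.1 hw with h | h
    · linarith
    · linarith [neg_abs_le w.re, abs_re_lt_norm.2 h]
  refine ⟨conj w + ‖w‖, by simpa using hre, ?_⟩
  have : (conj w + ‖w‖) * w = ‖w‖ * (‖w‖ + w) := by
    rw [add_mul, conj_mul']
    ring
  rw [this, re_ofReal_mul, add_re, ofReal_re]
  exact mul_pos hw0 (by linarith)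

lemma Complex.div_mem_slitPlane {u v : ℂ} (hu : 0 < u.re) (hv : 0 < v.re) :
    v / u ∈ slitPlane := by
  rw [mem_slitPlane_iff]
  by_contra! h
  have hv' : v.re = (v / u).re * u.re := by
    conv_lhs => rw [← div_mul_cancel₀ v (ne_zero_of_re_pos hu)]
    simp [mul_re, h.2]
  nlinarith

section Polynomial

open Polynomial

theorem Polynomial.degree_le_of_isBigO_cobounded {𝕜 : Type*} [NontriviallyNormedField 𝕜]
    {P Q : 𝕜[X]} (h : P.eval =O[cobounded 𝕜] Q.eval) : P.degree ≤ Q.degree := by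
  by_contra! hlt
  have hP : P ≠ 0 := ne_zero_of_degree_gt hlt
  refine isLittleO_irrefl (Eventually.frequently ?_)
    (h.trans_isLittleO (isLittleO_cobounded_of_degree_lt hlt))
  exact isBounded_def.1 (finite_setOfPred_isRoot hP).isBounded

theorem Polynomial.dvd_of_norm_eval_le_mul {𝕜 : Type*} [NontriviallyNormedField 𝕜]
    [IsAlgClosed 𝕜] {M : 𝕜 → ℝ} (hM : Continuous M) {P Q : 𝕜[X]}
    (h : ∀ w, ‖P.eval w‖ ≤ M w * ‖Q.eval w‖) : Q ∣ P := by
  induction hn : Q.natDegree using Nat.strong_induction_on generalizing P Q with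
  | _ n ih =>
  rcases le_or_gt Q.degree 0 with hQ | hQ
  · rw [eq_C_of_degree_le_zero hQ] at h ⊢
    by_cases hk : Q.coeff 0 = 0
    · have hP : P = 0 := Polynomial.funext fun w => by simpa [hk] using h w
      simp [hP]
    · exact (isUnit_C.2 (Ne.isUnit hk)).dvd
  obtain ⟨x, hx⟩ := IsAlgClosed.exists_root Q hQ.ne'
  have hPx : P.IsRoot x := norm_le_zero_iff.1 (by simpa [hx.eq_zero] using h x)
  rw [← mul_divByMonic_eq_iff_isRoot.2 hx, ← mul_divByMonic_eq_iff_isRoot.2 hPx] at h ⊢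
  have hoff : ∀ w ∈ ({x}ᶜ : Set 𝕜),
      ‖(P /ₘ (X - C x)).eval w‖ ≤ M w * ‖(Q /ₘ (X - C x)).eval w‖ := by
    intro w hw
    have hwx : 0 < ‖w - x‖ := norm_pos_iff.2 (sub_ne_zero.2 hw)
    have := h w
    simp only [eval_mul, eval_sub, eval_X, eval_C, norm_mul] at this
    nlinarith
  have h₁ := fun w => le_on_closure hoff (by fun_prop) (by fun_prop) (dense_compl_singleton x w)
  refine mul_dvd_mul_left _ (ih _ ?_ h₁ rfl)
  rw [← hn, natDegree_divByMonic _ (monic_X_sub_C x), natDegree_X_sub_C]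
  have := natDegree_pos_iff_degree_pos.2 hQ
  omega

theorem Polynomial.exists_natDegree_le_one_of_norm_eval_le {𝕜 : Type*}
    [NontriviallyNormedField 𝕜] [IsAlgClosed 𝕜] {P Q : 𝕜[X]} (hQ : Q ≠ 0) {s : Set 𝕜}
    (hs : Dense s) (M : ℝ) (h : ∀ w ∈ s, ‖P.eval w‖ ≤ M * max 1 ‖w‖ * ‖Q.eval w‖) :
    ∃ T : 𝕜[X], T.natDegree ≤ 1 ∧ P = Q * T := by
  have hall : ∀ w, ‖P.eval w‖ ≤ M * max 1 ‖w‖ * ‖Q.eval w‖ := fun w =>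
    le_on_closure h (by fun_prop) (by fun_prop) (hs w)
  obtain ⟨T, rfl⟩ := dvd_of_norm_eval_le_mul (by fun_prop) hall
  refine ⟨T, natDegree_le_of_degree_le ((degree_le_of_isBigO_cobounded (Q := X) ?_).trans
    degree_X_le), rfl⟩
  refine IsBigO.of_bound M ?_
  filter_upwards [isBounded_def.1 (finite_setOfPred_isRoot hQ).isBounded,
    tendsto_norm_cobounded_atTop.eventually_ge_atTop 1] with w hroot hw
  have hQw : 0 < ‖Q.eval w‖ := norm_pos_iff.2 hroot
  have := hall w
  rw [eval_mul, norm_mul, max_eq_right hw] at this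
  rw [eval_X]
  nlinarith

lemma Polynomial.eval_mvPolynomial_aeval {R σ : Type*} [CommRing R] (f : σ → R[X])
    (p : MvPolynomial σ R) (w : R) :
    (MvPolynomial.aeval f p).eval w = MvPolynomial.eval (fun i => (f i).eval w) p := by
  rw [← coe_aeval_eq_eval, ← AlgHom.comp_apply, MvPolynomial.comp_aeval]
  rfl

theorem exists_affine_of_rational_on_halfPlanes (g : ℂ → ℂ) (P Q : ℂ → ℂ[X]) (α : ℝ)
    (hchart : ∀ c w : ℂ, 0 < c.re → 0 < (c * w).re →
      (Q c).eval w ≠ 0 ∧ (P c).eval w = c * g w * (Q c).eval w)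
    (hbound : ∀ w ∈ slitPlane, ‖g w‖ ≤ α * max 1 ‖w‖) :
    ∃ a b : ℂ, ∀ w ∈ slitPlane, g w = a + b * w := by
  -- The positive reals lie in every chart, so all charts give the same rational function.
  have hglue : ∀ c : ℂ, 0 < c.re → P c * Q 1 = C c * P 1 * Q c := by
    intro c hc
    refine eq_of_infinite_eval_eq _ _
      (((Ioi_infinite (0 : ℝ)).image ofReal_injective.injOn).mono ?_)
    rintro _ ⟨t, ht : 0 < t, rfl⟩
    obtain ⟨-, hPc⟩ := hchart c t hc (by simpa using mul_pos hc ht)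
    obtain ⟨-, hP1⟩ := hchart 1 t one_pos (by simpa using ht)
    simp only [mem_ofPred_eq, eval_mul, eval_C, hPc, hP1]
    ring
  have hQ1 : Q 1 ≠ 0 := fun h0 => (hchart 1 1 one_pos (by simp)).1 (by simp [h0])
  have hP1 : ∀ w ∈ slitPlane, ‖(P 1).eval w‖ ≤ α * max 1 ‖w‖ * ‖(Q 1).eval w‖ := by
    intro w hw
    obtain ⟨c, hc, hcw⟩ := exists_re_pos_and_re_mul_pos hw
    obtain ⟨hQc, hPc⟩ := hchart c w hc hcw
    have := congrArg (eval w) (hglue c hc)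
    simp only [eval_mul, eval_C, hPc] at this
    have hP1w : (P 1).eval w = g w * (Q 1).eval w :=
      mul_right_cancel₀ (mul_ne_zero (ne_zero_of_re_pos hc) hQc) (by linear_combination -this)
    rw [hP1w, norm_mul]
    exact mul_le_mul_of_nonneg_right (hbound w hw) (norm_nonneg _)
  obtain ⟨T, hT, hPT⟩ := exists_natDegree_le_one_of_norm_eval_le hQ1 dense_slitPlane α hP1
  refine ⟨T.coeff 0, T.coeff 1, fun w hw => ?_⟩
  -- `Q 1` may vanish at `w`, so compare `g` with `T` in a chart around `w` instead.
  obtain ⟨c, hc, hcw⟩ := exists_re_pos_and_re_mul_pos hw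
  obtain ⟨hQc, hPc⟩ := hchart c w hc hcw
  have hPcT : P c = C c * T * Q c := mul_right_cancel₀ hQ1 (by rw [hglue c hc, hPT]; ring)
  have := congrArg (eval w) hPcT
  rw [hPc, eval_mul, eval_mul, eval_C] at this
  have hgT : g w = T.eval w :=
    mul_right_cancel₀ (mul_ne_zero (ne_zero_of_re_pos hc) hQc) (by linear_combination this)
  rw [hgT, eval_eq_sum_range' (Nat.lt_succ_of_le hT)]
  simp [Finset.sum_range_succ]

theorem exists_linear_of_homogeneous_rational (g : ℂ → ℂ) (p q : MvPolynomial (Fin 2) ℂ) (α : ℝ)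
    (hq : ∀ u v : ℂ, 0 < u.re → 0 < v.re → MvPolynomial.eval ![u, v] q ≠ 0)
    (hrat : ∀ u v : ℂ, 0 < u.re → 0 < v.re →
      u * g (v / u) = MvPolynomial.eval ![u, v] p / MvPolynomial.eval ![u, v] q)
    (hbound : ∀ u v : ℂ, 0 < u.re → 0 < v.re → ‖u * g (v / u)‖ ≤ α * max ‖u‖ ‖v‖) :
    ∃ a b : ℂ, ∀ u v : ℂ, 0 < u.re → 0 < v.re → u * g (v / u) = a * u + b * v := by
  set restrict : MvPolynomial (Fin 2) ℂ → ℂ → ℂ[X] :=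
    fun r c => MvPolynomial.aeval ![C c, C c * X] r
  have heval : ∀ r c w, (restrict r c).eval w = MvPolynomial.eval ![c, c * w] r := by
    intro r c w
    rw [eval_mvPolynomial_aeval]
    congr 2
    funext i
    fin_cases i <;> simp
  obtain ⟨a, b, hab⟩ := exists_affine_of_rational_on_halfPlanes g (restrict p) (restrict q) α
    (fun c w hc hcw => by
      have hrat' := hrat c (c * w) hc hcw
      rw [mul_div_cancel_left₀ w (ne_zero_of_re_pos hc)] at hrat'
      rw [heval, heval, hrat', div_mul_cancel₀ _ (hq c (c * w) hc hcw)]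
      exact ⟨hq c (c * w) hc hcw, rfl⟩)
    (fun w hw => by
      obtain ⟨c, hc, hcw⟩ := exists_re_pos_and_re_mul_pos hw
      have hmax : max ‖c‖ ‖c * w‖ = ‖c‖ * max 1 ‖w‖ := by
        rw [norm_mul, mul_max_of_nonneg _ _ (norm_nonneg c), mul_one]
      have := hbound c (c * w) hc hcw
      rw [mul_div_cancel_left₀ w (ne_zero_of_re_pos hc), norm_mul, hmax, mul_left_comm] at this
      exact le_of_mul_le_mul_left this (norm_pos_iff.2 (ne_zero_of_re_pos hc)))
  refine ⟨a, b, fun u v hu hv => ?_⟩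
  rw [hab _ (div_mem_slitPlane hu hv)]
  field_simp [ne_zero_of_re_pos hu]

end Polynomial

def fromCone (τ : ℂ × ℂ) (u v : ℂ) : ℂ × ℂ := (-(τ.1 * u), -(τ.2 * v))

lemma conj_mul_fromCone {τ : ℂ × ℂ} (hτ : ‖τ.1‖ = 1 ∧ ‖τ.2‖ = 1) (u v : ℂ) :
    conj τ.1 * (fromCone τ u v).1 = -u ∧ conj τ.2 * (fromCone τ u v).2 = -v := by
  simp only [fromCone]
  constructor
  · linear_combination (-u) * conj_mul_self_of_norm_eq_one hτ.1
  · linear_combination (-v) * conj_mul_self_of_norm_eq_one hτ.2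

lemma exists_eq_fromCone {τ : ℂ × ℂ} (hτ : ‖τ.1‖ = 1 ∧ ‖τ.2‖ = 1) (h : ℂ × ℂ) :
    ∃ u v : ℂ, h = fromCone τ u v :=
  ⟨-(conj τ.1 * h.1), -(conj τ.2 * h.2),
    Prod.ext (by simp only [fromCone]; linear_combination -h.1 * conj_mul_self_of_norm_eq_one hτ.1)
      (by simp only [fromCone]; linear_combination -h.2 * conj_mul_self_of_norm_eq_one hτ.2)⟩

lemma supNorm_fromCone {τ : ℂ × ℂ} (hτ : ‖τ.1‖ = 1 ∧ ‖τ.2‖ = 1) (u v : ℂ) :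
    supNorm (fromCone τ u v) = max ‖u‖ ‖v‖ := by
  simp [supNorm, fromCone, hτ.1, hτ.2]

lemma intoBidisk_iff {τ : ℂ × ℂ} (hτ : ‖τ.1‖ = 1 ∧ ‖τ.2‖ = 1) (h : ℂ × ℂ) :
    IntoBidisk τ h ↔ (conj τ.1 * h.1).re < 0 ∧ (conj τ.2 * h.2).re < 0 := by
  rw [← eventually_norm_add_mul_lt_one_iff hτ.1, ← eventually_norm_add_mul_lt_one_iff hτ.2,
    ← eventually_and, (nhdsGT_basis 0).eventually_iff]
  simp only [IntoBidisk, mem_Ioo, and_imp]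
  rfl

lemma intoBidisk_fromCone_iff {τ : ℂ × ℂ} (hτ : ‖τ.1‖ = 1 ∧ ‖τ.2‖ = 1) (u v : ℂ) :
    IntoBidisk τ (fromCone τ u v) ↔ 0 < u.re ∧ 0 < v.re := by
  simp [intoBidisk_iff hτ, conj_mul_fromCone hτ]

def coneSubst (τ : ℂ × ℂ) : Fin 2 → MvPolynomial (Fin 2) ℂ :=
  ![MvPolynomial.C (-τ.1) * MvPolynomial.X 0, MvPolynomial.C (-τ.2) * MvPolynomial.X 1]

lemma eval_bind₁_coneSubst (τ : ℂ × ℂ) (r : MvPolynomial (Fin 2) ℂ) (u v : ℂ) :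
    MvPolynomial.eval ![u, v] (MvPolynomial.bind₁ (coneSubst τ) r) =
      MvPolynomial.eval ![(fromCone τ u v).1, (fromCone τ u v).2] r := by
  rw [MvPolynomial.eval, MvPolynomial.eval₂Hom_bind₁]
  congr 2
  funext i
  fin_cases i <;> simp [coneSubst, fromCone]

theorem stmt19_general
    (τ : ℂ × ℂ) (hτ : ‖τ.1‖ = 1 ∧ ‖τ.2‖ = 1)
    (ω : ℂ)
    (D : ℂ × ℂ → ℂ)
    (η : ℂ → ℂ)
    (hform : ∀ h : ℂ × ℂ, IntoBidisk τ h →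
      D h = -ω * starRingEnd ℂ τ.2 * h.2 *
        η (starRingEnd ℂ τ.2 * h.2 / (starRingEnd ℂ τ.1 * h.1)))
    -- D is a rational function of h
    (p q : MvPolynomial (Fin 2) ℂ)
    (hq : ∀ h : ℂ × ℂ, IntoBidisk τ h → MvPolynomial.eval ![h.1, h.2] q ≠ 0)
    (hDrat : ∀ h : ℂ × ℂ, IntoBidisk τ h →
      D h = MvPolynomial.eval ![h.1, h.2] p / MvPolynomial.eval ![h.1, h.2] q)
    -- D is linearly bounded
    (α : ℝ)
    (hbound : ∀ h : ℂ × ℂ, IntoBidisk τ h → ‖D h‖ ≤ α * supNorm h) :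
    -- conclusion: D is linear
    ∃ l : ℂ × ℂ, ∀ h : ℂ × ℂ, IntoBidisk τ h → D h = l.1 * h.1 + l.2 * h.2 := by
  have hinto : ∀ u v : ℂ, 0 < u.re → 0 < v.re → IntoBidisk τ (fromCone τ u v) :=
    fun u v hu hv => (intoBidisk_fromCone_iff hτ u v).2 ⟨hu, hv⟩
  have hDg : ∀ u v : ℂ, 0 < u.re → 0 < v.re →
      D (fromCone τ u v) = u * (ω * (v / u) * η (v / u)) := by
    intro u v hu hv
    rw [hform _ (hinto u v hu hv), (conj_mul_fromCone hτ u v).1, mul_assoc _ _ (fromCone τ u v).2,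
      (conj_mul_fromCone hτ u v).2, neg_div_neg_eq]
    field_simp [ne_zero_of_re_pos hu]
  obtain ⟨a, b, hab⟩ := exists_linear_of_homogeneous_rational (fun w => ω * w * η w)
    (MvPolynomial.bind₁ (coneSubst τ) p) (MvPolynomial.bind₁ (coneSubst τ) q) α
    (fun u v hu hv => eval_bind₁_coneSubst τ q u v ▸ hq _ (hinto u v hu hv))
    (fun u v hu hv => by
      rw [← hDg u v hu hv, eval_bind₁_coneSubst, eval_bind₁_coneSubst]
      exact hDrat _ (hinto u v hu hv))
    (fun u v hu hv => by
      rw [← hDg u v hu hv, ← supNorm_fromCone hτ]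
      exact hbound _ (hinto u v hu hv))
  refine ⟨(-(a * conj τ.1), -(b * conj τ.2)), fun h hh => ?_⟩
  obtain ⟨u, v, rfl⟩ := exists_eq_fromCone hτ h
  obtain ⟨hu, hv⟩ := (intoBidisk_fromCone_iff hτ u v).1 hh
  rw [hDg u v hu hv, hab u v hu hv]
  linear_combination a * (conj_mul_fromCone hτ u v).1 + b * (conj_mul_fromCone hτ u v).2

/-- if `φ : 𝔻² → closure(𝔻)` is rational with a B point at `τ ∈ 𝕋²`, whose
directional derivative `Dφ(τ)[h] = -ω·conj(τ₂)h₂·η(conj(τ₂)h₂/(conj(τ₁)h₁))` (with `η` and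
`-wη(w)` in the Pick class) is a rational function of `h` bounded by `α·‖h‖`, then
`Dφ(τ)[h]` is a linear function of `h`. -/
theorem stmt19 (φ : ℂ × ℂ → ℂ)
    -- φ is rational with no singularities in 𝔻²
    (P Q : MvPolynomial (Fin 2) ℂ)
    (hQ : ∀ z ∈ Bidisk, MvPolynomial.eval ![z.1, z.2] Q ≠ 0)
    (hrat : ∀ z ∈ Bidisk,
      φ z = MvPolynomial.eval ![z.1, z.2] P / MvPolynomial.eval ![z.1, z.2] Q)
    (hφ_map : ∀ z ∈ Bidisk, ‖φ z‖ ≤ 1)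
    (τ : ℂ × ℂ) (hτ : ‖τ.1‖ = 1 ∧ ‖τ.2‖ = 1)
    (ω : ℂ) (hω : ‖ω‖ = 1)
    -- B point: the Julia quotient has finite liminf at τ
    (hB : ∃ C : ℝ, ∀ ε > (0 : ℝ), ∃ z ∈ Bidisk,
      supNorm (z - τ) < ε ∧ 1 - ‖φ z‖ ≤ C * (1 - supNorm z))
    -- the directional derivative D, as a limit of difference quotients
    (D : ℂ × ℂ → ℂ)
    (hD : ∀ h : ℂ × ℂ, IntoBidisk τ h →
      Tendsto (fun t : ℝ => (φ (τ + (t : ℂ) • h) - ω) / (t : ℂ))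
        (nhdsWithin 0 (Set.Ioi 0)) (nhds (D h)))
    -- D is given by the slope function η, with η and -w·η(w) in the Pick class
    (η : ℂ → ℂ)
    (hη_hol : DifferentiableOn ℂ η {w : ℂ | 0 < w.im})
    (hη_pick : ∀ w : ℂ, 0 < w.im → 0 ≤ (η w).im)
    (hη_pick' : ∀ w : ℂ, 0 < w.im → 0 ≤ (-(w * η w)).im)
    (hform : ∀ h : ℂ × ℂ, IntoBidisk τ h →
      D h = -ω * starRingEnd ℂ τ.2 * h.2 *
        η (starRingEnd ℂ τ.2 * h.2 / (starRingEnd ℂ τ.1 * h.1)))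
    -- D is a rational function of h
    (p q : MvPolynomial (Fin 2) ℂ)
    (hq : ∀ h : ℂ × ℂ, IntoBidisk τ h → MvPolynomial.eval ![h.1, h.2] q ≠ 0)
    (hDrat : ∀ h : ℂ × ℂ, IntoBidisk τ h →
      D h = MvPolynomial.eval ![h.1, h.2] p / MvPolynomial.eval ![h.1, h.2] q)
    -- D is linearly bounded
    (α : ℝ) (hα : 0 < α)
    (hbound : ∀ h : ℂ × ℂ, IntoBidisk τ h → ‖D h‖ ≤ α * supNorm h) :
    -- conclusion: D is linear
    ∃ l : ℂ × ℂ, ∀ h : ℂ × ℂ, IntoBidisk τ h → D h = l.1 * h.1 + l.2 * h.2 :=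
  stmt19_general τ hτ ω D η hform p q hq hDrat α hbound
end
end
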